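/- arXiv:1412.5617 — 10 statements merged into one kernel-verified Lean document; each statement's English description precedes it below -/
import Mathlib

section
/- Let d ≥ 1, ε > 0, and let Z be a random vector in ℝ^d whose density (with respect to Lebesgue measure) is proportional to exp(−(ε/2)‖z‖). Then E[Z] = 0, and for every fixed vector g ∈ ℝ^d with ‖g‖ ≤ 2 one has E[‖g + Z‖²] ≤ 4 + 4(d² + d)/ε². (This gives the noise level Γ² = 4 + 4(d²+d)/ε² of the locally differentially private gradient oracle, since the noiseless gradient λw + ∇ℓ(w,x,y) has norm at most 2 when ‖λw‖ ≤ 1 and ‖∇ℓ(w,x,y)‖ ≤ 1.) -/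
/-!
The weight `exp (-a ‖z‖)` is radial, so `z ↦ exp (-a ‖z‖) • z` is odd and the mean vanishes.
Expanding `‖g + z‖² = ‖g‖² + 2⟪g, z⟫ + ‖z‖²`, the cross term integrates to `⟪g, mean⟫ = 0`,
and in polar coordinates the `k`-th moment in dimension `n` is
`n · vol(B) · (n - 1 + k)! / a ^ (n + k)`, so the second moment is `(n + 1) n / a²` times the total mass.
With `a = ε / 2` this factor is `4 (d² + d) / ε²`, and `‖g‖² ≤ 4`.
-/

open MeasureTheory Real Set Metric Module
open scoped Nat

lemma integral_fun_norm_smul_self_eq_zero {E : Type*} [NormedAddCommGroup E] [NormedSpace ℝ E]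
    [MeasurableSpace E] [MeasurableNeg E] (μ : Measure E) [μ.IsNegInvariant] (f : ℝ → ℝ) :
    ∫ z, f ‖z‖ • z ∂μ = 0 := by
  have := IsAddTorsionFree.of_isTorsionFree ℝ E
  refine self_eq_neg.mp ?_
  conv_lhs => rw [← integral_neg_eq_self _ μ]
  simp only [norm_neg, smul_neg, integral_neg]

lemma integral_norm_add_sq_mul_eq {E : Type*} [NormedAddCommGroup E] [InnerProductSpace ℝ E]
    [CompleteSpace E] [MeasurableSpace E] {μ : Measure E} {w : E → ℝ} (hw : Integrable w μ)
    (hw₁ : Integrable (fun z ↦ w z • z) μ) (hw₂ : Integrable (fun z ↦ ‖z‖ ^ 2 * w z) μ)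
    (hmean : ∫ z, w z • z ∂μ = 0) (g : E) :
    ∫ z, ‖g + z‖ ^ 2 * w z ∂μ = ‖g‖ ^ 2 * ∫ z, w z ∂μ + ∫ z, ‖z‖ ^ 2 * w z ∂μ := by
  have hcross : ∫ z, 2 * inner ℝ g (w z • z) ∂μ = 0 := by
    rw [integral_const_mul, integral_inner hw₁, hmean, inner_zero_right, mul_zero]
  have hexpand : ∀ z,
      ‖g + z‖ ^ 2 * w z = (‖g‖ ^ 2 * w z + 2 * inner ℝ g (w z • z)) + ‖z‖ ^ 2 * w z := by
    intro z
    rw [norm_add_sq_real, real_inner_smul_right]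
    ring
  have hconst : Integrable (fun z ↦ ‖g‖ ^ 2 * w z) μ := hw.const_mul _
  have hinner : Integrable (fun z ↦ 2 * inner ℝ g (w z • z)) μ := (hw₁.const_inner g).const_mul 2
  have hsum : Integrable (fun z ↦ ‖g‖ ^ 2 * w z + 2 * inner ℝ g (w z • z)) μ := hconst.add hinner
  simp_rw [hexpand]
  rw [integral_add hsum hw₂, integral_add hconst hinner, hcross, add_zero, integral_const_mul]

lemma integrableOn_pow_mul_exp_neg_mul_Ioi (n : ℕ) {a : ℝ} (ha : 0 < a) :
    IntegrableOn (fun y : ℝ ↦ y ^ n * exp (-a * y)) (Ioi 0) := by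
  simpa using integrableOn_rpow_mul_exp_neg_mul_rpow (s := n) (p := 1)
    (by linarith [n.cast_nonneg (α := ℝ)]) one_pos ha

lemma integral_pow_mul_exp_neg_mul_Ioi (n : ℕ) {a : ℝ} (ha : 0 < a) :
    ∫ y in Ioi 0, y ^ n * exp (-a * y) = n ! / a ^ (n + 1) := by
  have h := integral_rpow_mul_exp_neg_mul_Ioi (a := n + 1) (by positivity) ha
  simp only [add_sub_cancel_right, rpow_natCast, neg_mul] at h ⊢
  rw [h, Gamma_nat_eq_factorial, ← Nat.cast_succ, rpow_natCast, one_div_pow, one_div_mul_eq_div]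

section RadialMoments

variable {E : Type*} [NormedAddCommGroup E] [NormedSpace ℝ E] [FiniteDimensional ℝ E]
  [MeasurableSpace E] [BorelSpace E] [Nontrivial E] (μ : Measure E) [μ.IsAddHaarMeasure]
  {a : ℝ}

lemma integrable_norm_pow_mul_exp_neg_mul_norm (k : ℕ) (ha : 0 < a) :
    Integrable (fun z : E ↦ ‖z‖ ^ k * exp (-a * ‖z‖)) μ := by
  rw [integrable_fun_norm_addHaar μ (f := fun r ↦ r ^ k * exp (-a * r))]
  simpa only [smul_eq_mul, ← mul_assoc, ← pow_add]
    using integrableOn_pow_mul_exp_neg_mul_Ioi (finrank ℝ E - 1 + k) ha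

lemma integral_norm_pow_mul_exp_neg_mul_norm (k : ℕ) (ha : 0 < a) :
    ∫ z : E, ‖z‖ ^ k * exp (-a * ‖z‖) ∂μ = finrank ℝ E * μ.real (ball 0 1) *
      ((finrank ℝ E - 1 + k)! / a ^ (finrank ℝ E - 1 + k + 1)) := by
  rw [integral_fun_norm_addHaar μ (fun r ↦ r ^ k * exp (-a * r))]
  simp only [smul_eq_mul, ← mul_assoc, ← pow_add, nsmul_eq_mul]
  rw [integral_pow_mul_exp_neg_mul_Ioi _ ha]

lemma integral_norm_sq_mul_exp_neg_mul_norm (ha : 0 < a) :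
    ∫ z : E, ‖z‖ ^ 2 * exp (-a * ‖z‖) ∂μ =
      (finrank ℝ E + 1) * finrank ℝ E / a ^ 2 * ∫ z : E, exp (-a * ‖z‖) ∂μ := by
  have h₀ := integral_norm_pow_mul_exp_neg_mul_norm μ 0 ha
  rw [integral_norm_pow_mul_exp_neg_mul_norm μ 2 ha]
  simp only [pow_zero, one_mul, add_zero] at h₀
  rw [h₀]
  obtain ⟨m, hm⟩ := Nat.exists_eq_succ_of_ne_zero (finrank_pos (R := ℝ) (M := E)).ne'
  rw [hm]
  simp only [Nat.succ_sub_one, Nat.factorial_succ]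
  push_cast
  field_simp
  ring

lemma integrable_exp_neg_mul_norm_smul (ha : 0 < a) :
    Integrable (fun z : E ↦ exp (-a * ‖z‖) • z) μ := by
  refine (integrable_norm_iff (by fun_prop)).mp ?_
  simpa only [norm_smul, norm_of_nonneg (exp_pos _).le, pow_one, mul_comm]
    using integrable_norm_pow_mul_exp_neg_mul_norm μ 1 ha

end RadialMoments

/-- For noise `Z` with density proportional to `exp (-(ε/2) ‖z‖)` on ℝ^d one has
`E[Z] = 0`, and for any fixed vector `g` with `‖g‖ ≤ 2`,
`E[‖g + Z‖²] ≤ 4 + 4(d² + d)/ε²`.  Expectations with respect to the normalized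
density are expressed as weighted Lebesgue integrals: the mean condition becomes
`∫ exp(-(ε/2)‖z‖) • z dz = 0`, and the second-moment bound becomes
`∫ ‖g + z‖² exp(-(ε/2)‖z‖) dz ≤ (4 + 4(d²+d)/ε²) ∫ exp(-(ε/2)‖z‖) dz`. -/
theorem statement_2 (d : ℕ) (hd : 1 ≤ d) (ε : ℝ) (hε : 0 < ε)
    (g : EuclideanSpace ℝ (Fin d)) (hg : ‖g‖ ≤ 2) :
    (∫ z : EuclideanSpace ℝ (Fin d), Real.exp (-(ε / 2) * ‖z‖) • z) = 0 ∧
    ∫ z : EuclideanSpace ℝ (Fin d), ‖g + z‖ ^ 2 * Real.exp (-(ε / 2) * ‖z‖) ≤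
      (4 + 4 * ((d : ℝ) ^ 2 + (d : ℝ)) / ε ^ 2) *
        ∫ z : EuclideanSpace ℝ (Fin d), Real.exp (-(ε / 2) * ‖z‖) := by
  have : NeZero d := ⟨by omega⟩
  have ha : 0 < ε / 2 := by positivity
  set μ : Measure (EuclideanSpace ℝ (Fin d)) := volume
  have hmean := integral_fun_norm_smul_self_eq_zero μ fun r ↦ exp (-(ε / 2) * r)
  have hw := integrable_norm_pow_mul_exp_neg_mul_norm μ 0 ha
  simp only [pow_zero, one_mul] at hw
  refine ⟨hmean, ?_⟩
  rw [integral_norm_add_sq_mul_eq hw (integrable_exp_neg_mul_norm_smul μ ha)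
    (integrable_norm_pow_mul_exp_neg_mul_norm μ 2 ha) hmean g,
    integral_norm_sq_mul_exp_neg_mul_norm μ ha, finrank_euclideanSpace_fin]
  have hg₂ : ‖g‖ ^ 2 ≤ 4 := by nlinarith [norm_nonneg g]
  have hconst : ((d : ℝ) + 1) * d / (ε / 2) ^ 2 = 4 * ((d : ℝ) ^ 2 + d) / ε ^ 2 := by
    field_simp
    ring
  rw [hconst, add_mul]
  gcongr
end

section
/- Let σ ∈ [0, 1/2) and let a, b, u ∈ ℝ^d satisfy ‖a‖ ≤ 1, ‖b‖ ≤ 1, ‖u‖ ≤ 1. Let X be the random vector in ℝ^d taking the value u + ((1−σ)a − σb)/(1−2σ) with probability 1 − σ and the value u + ((1−σ)b − σa)/(1−2σ) with probability σ. Then E[X] = u + a and E[‖X‖²] ≤ 3 + 1/(1 − 2σ)². (This shows the random-classification-noise gradient oracle satisfies the noise model with noise level Γ² = 3 + 1/(1−2σ)².) -/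
/-!
The mean is an identity of convex combinations: the weights `1 - σ` and `σ` undo the label
flip exactly. For the second moment, expand `‖u + v‖²` around the shift `u`: the cross terms
average to `2⟪u, a⟫ ≤ 2` by the mean identity, `‖u‖² ≤ 1`, and each debiased gradient has norm
at most `((1 - σ) + σ) / (1 - 2σ) = 1 / (1 - 2σ)` by the triangle inequality.
-/

open RealInnerProductSpace

section

variable {E : Type*}

/-- The debiased gradient `((1 - σ) a - σ b) / (1 - 2σ)` of the random-classification-noise
oracle, where `a` is the gradient at the observed label and `b` the one at the flipped label. -/
noncomputable def rcnGrad [AddCommGroup E] [Module ℝ E] (σ : ℝ) (a b : E) : E :=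
  (1 - 2 * σ)⁻¹ • ((1 - σ) • a - σ • b)

theorem rcnGrad_mean [AddCommGroup E] [Module ℝ E] {σ : ℝ} (hσ : 1 - 2 * σ ≠ 0) (a b : E) :
    (1 - σ) • rcnGrad σ a b + σ • rcnGrad σ b a = a := by
  unfold rcnGrad
  match_scalars
  · linear_combination mul_inv_cancel₀ hσ
  · ring

theorem norm_rcnGrad_le [SeminormedAddCommGroup E] [NormedSpace ℝ E] {σ : ℝ}
    (hσ₀ : 0 ≤ σ) (hσ₁ : σ < 1 / 2) {a b : E} (ha : ‖a‖ ≤ 1) (hb : ‖b‖ ≤ 1) :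
    ‖rcnGrad σ a b‖ ≤ (1 - 2 * σ)⁻¹ := by
  have hσ' : 0 ≤ 1 - σ := by linarith
  have hsum : ‖(1 - σ) • a - σ • b‖ ≤ 1 := calc
    ‖(1 - σ) • a - σ • b‖ ≤ (1 - σ) * ‖a‖ + σ * ‖b‖ := by
      simpa only [norm_smul, Real.norm_of_nonneg hσ', Real.norm_of_nonneg hσ₀]
        using norm_sub_le ((1 - σ) • a) (σ • b)
    _ ≤ (1 - σ) * 1 + σ * 1 := by gcongr
    _ = 1 := by ring
  rw [rcnGrad, norm_smul, Real.norm_of_nonneg (inv_nonneg.2 (by linarith))]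
  exact mul_le_of_le_one_right (inv_nonneg.2 (by linarith)) hsum

theorem weighted_norm_add_sq_eq [NormedAddCommGroup E] [InnerProductSpace ℝ E] {p q : ℝ}
    (hpq : p + q = 1) (u x y : E) :
    p * ‖u + x‖ ^ 2 + q * ‖u + y‖ ^ 2 =
      ‖u‖ ^ 2 + 2 * ⟪u, p • x + q • y⟫ + (p * ‖x‖ ^ 2 + q * ‖y‖ ^ 2) := by
  rw [norm_add_sq_real, norm_add_sq_real, inner_add_right, real_inner_smul_right,
    real_inner_smul_right]
  linear_combination ‖u‖ ^ 2 * hpq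

end

/-- The random-classification-noise gradient oracle satisfies the noise model
with `Γ² = 3 + 1/(1-2σ)²`: the two-point random vector `X` taking value
`u + ((1-σ)a - σb)/(1-2σ)` with probability `1 - σ` and
`u + ((1-σ)b - σa)/(1-2σ)` with probability `σ` has mean `u + a` and second
moment at most `3 + 1/(1-2σ)²`. -/
theorem statement_4 (d : ℕ) (σ : ℝ) (hσ : σ ∈ Set.Ico (0 : ℝ) (1 / 2))
    (a b u : EuclideanSpace ℝ (Fin d))
    (ha : ‖a‖ ≤ 1) (hb : ‖b‖ ≤ 1) (hu : ‖u‖ ≤ 1) :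
    (1 - σ) • (u + (1 - 2 * σ)⁻¹ • ((1 - σ) • a - σ • b)) +
        σ • (u + (1 - 2 * σ)⁻¹ • ((1 - σ) • b - σ • a)) = u + a ∧
    (1 - σ) * ‖u + (1 - 2 * σ)⁻¹ • ((1 - σ) • a - σ • b)‖ ^ 2 +
        σ * ‖u + (1 - 2 * σ)⁻¹ • ((1 - σ) • b - σ • a)‖ ^ 2 ≤
      3 + 1 / (1 - 2 * σ) ^ 2 := by
  obtain ⟨hσ₀, hσ₁⟩ := hσ
  have hσ' : 1 - 2 * σ ≠ 0 := by linarith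
  change (1 - σ) • (u + rcnGrad σ a b) + σ • (u + rcnGrad σ b a) = u + a ∧
    (1 - σ) * ‖u + rcnGrad σ a b‖ ^ 2 + σ * ‖u + rcnGrad σ b a‖ ^ 2 ≤ 3 + 1 / (1 - 2 * σ) ^ 2
  have hmean := rcnGrad_mean hσ' a b
  refine ⟨?_, ?_⟩
  · calc (1 - σ) • (u + rcnGrad σ a b) + σ • (u + rcnGrad σ b a)
        _ = u + ((1 - σ) • rcnGrad σ a b + σ • rcnGrad σ b a) := by module
        _ = u + a := by rw [hmean]
  · have hua : ⟪u, a⟫ ≤ 1 :=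
      (real_inner_le_norm u a).trans (mul_le_one₀ hu (norm_nonneg a) ha)
    have hu2 : ‖u‖ ^ 2 ≤ 1 := pow_le_one₀ (norm_nonneg u) hu
    have hab : ‖rcnGrad σ a b‖ ^ 2 ≤ ((1 - 2 * σ)⁻¹) ^ 2 := by
      gcongr; exact norm_rcnGrad_le hσ₀ hσ₁ ha hb
    have hba : ‖rcnGrad σ b a‖ ^ 2 ≤ ((1 - 2 * σ)⁻¹) ^ 2 := by
      gcongr; exact norm_rcnGrad_le hσ₀ hσ₁ hb ha
    rw [weighted_norm_add_sq_eq (sub_add_cancel 1 σ), hmean, one_div, ← inv_pow]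
    nlinarith
end

section
/- Let λ > 0, c > 0, T ∈ ℕ with T ≥ 1, and for 1 ≤ t ≤ T define Δ_t = (c/t)·∏_{s=t+1}^{T} (1 − cλ/s) (empty product = 1). Then: (i) for every 1 ≤ t ≤ T−1 with 1 − cλ/(t+1) ≠ 0, Δ_{t+1}²/Δ_t² = (1/(1 + (1 − cλ)/t))²; (ii) if cλ < 1 then Δ_1² > Δ_2² > … > Δ_T² > 0 (the sequence Δ_t² is strictly decreasing); (iii) if cλ = 1 then Δ_t = c/T for all t; (iv) if 1 < cλ < 3 then Δ_1² ≤ Δ_2² ≤ … ≤ Δ_T² (the sequence Δ_t² is nondecreasing). -/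
/-!
Peeling off the first factor of the product gives `Δ t = Δ (t + 1) * ((t + 1 - cλ) / t)`, so every
claim reduces to the size of the ratio `(t + 1 - cλ) / t`: it exceeds `1` when `cλ < 1`, equals `1`
when `cλ = 1`, and lies in `[-1, 1]` when `1 ≤ cλ ≤ 3` and `t ≥ 1`.
-/

open Finset

theorem prod_Icc_succ_bot {M : Type*} [CommMonoid M] (f : ℕ → M) {m n : ℕ}
    (h : m ≤ n) : ∏ k ∈ Icc m n, f k = f m * ∏ k ∈ Icc (m + 1) n, f k := by
  rw [Icc_eq_cons_Ioc h, prod_cons, Icc_add_one_left_eq_Ioc]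

noncomputable def noiseWeight (c a : ℝ) (T t : ℕ) : ℝ :=
  c / t * ∏ s ∈ Icc (t + 1) T, (1 - a / s)

section noiseWeight

variable {c a : ℝ} {T t : ℕ}

theorem noiseWeight_self : noiseWeight c a T T = c / T := by
  simp [noiseWeight]

theorem noiseWeight_eq_mul_succ (htT : t + 1 ≤ T) :
    noiseWeight c a T t = noiseWeight c a T (t + 1) * ((t + 1 - a) / t) := by
  rcases Nat.eq_zero_or_pos t with rfl | ht
  · -- both sides are junk `0`, from division by `(0 : ℝ)`
    simp [noiseWeight]
  have ht0 : (t : ℝ) ≠ 0 := by positivity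
  rw [noiseWeight, noiseWeight, prod_Icc_succ_bot _ htT]
  push_cast
  field_simp

theorem noiseWeight_pos (hc : 0 < c) (ha : a < 1) (ht : 1 ≤ t) : 0 < noiseWeight c a T t := by
  have hfactor : ∀ s ∈ Icc (t + 1) T, 0 < 1 - a / (s : ℝ) := by
    intro s hs
    have hs1 : (1 : ℝ) ≤ s := by
      have := (mem_Icc.mp hs).1
      exact_mod_cast (by omega : 1 ≤ s)
    rw [sub_pos, div_lt_one (by linarith)]
    linarith
  have ht0 : (0 : ℝ) < t := by exact_mod_cast ht
  exact mul_pos (div_pos hc ht0) (prod_pos hfactor)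

theorem noiseWeight_one (ht : 1 ≤ t) (htT : t ≤ T) : noiseWeight c 1 T t = c / T := by
  refine Nat.decreasingInduction (motive := fun k _ => 1 ≤ k → noiseWeight c 1 T k = c / T)
    (fun k hk ih hk1 => ?_) (fun _ => noiseWeight_self) htT ht
  have hk0 : (k : ℝ) ≠ 0 := by positivity
  rw [noiseWeight_eq_mul_succ hk, ih (by omega), add_sub_cancel_right, div_self hk0, mul_one]

theorem sq_noiseWeight_succ (ht : 1 ≤ t) (htT : t + 1 ≤ T) (ha : 1 - a / (t + 1 : ℝ) ≠ 0) :
    noiseWeight c a T (t + 1) ^ 2 = noiseWeight c a T t ^ 2 * (1 / (1 + (1 - a) / t)) ^ 2 := by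
  have ht0 : (t : ℝ) ≠ 0 := by positivity
  have hratio : 1 + (1 - a) / t = (t + 1 - a) / t := by field_simp; ring
  have hnum : (t : ℝ) + 1 - a ≠ 0 := fun h => ha <| by
    rw [show a = t + 1 by linarith, div_self (by positivity), sub_self]
  rw [noiseWeight_eq_mul_succ htT, hratio]
  field_simp

theorem sq_noiseWeight_succ_lt (hc : 0 < c) (ha : a < 1) (ht : 1 ≤ t) (htT : t + 1 ≤ T) :
    noiseWeight c a T (t + 1) ^ 2 < noiseWeight c a T t ^ 2 := by
  have ht0 : (0 : ℝ) < t := by exact_mod_cast ht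
  have hratio : 1 < ((t : ℝ) + 1 - a) / t := by
    rw [lt_div_iff₀ ht0]
    linarith
  have hpos := noiseWeight_pos (T := T) hc ha (by omega : 1 ≤ t + 1)
  rw [noiseWeight_eq_mul_succ htT, mul_pow]
  exact lt_mul_of_one_lt_right (by positivity) (one_lt_pow₀ hratio two_ne_zero)

theorem sq_noiseWeight_le_succ (ha₁ : 1 ≤ a) (ha₃ : a ≤ 3) (ht : 1 ≤ t) (htT : t + 1 ≤ T) :
    noiseWeight c a T t ^ 2 ≤ noiseWeight c a T (t + 1) ^ 2 := by
  have ht1 : (1 : ℝ) ≤ t := by exact_mod_cast ht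
  have hratio : (((t : ℝ) + 1 - a) / t) ^ 2 ≤ 1 := by
    rw [div_pow, div_le_one (by positivity)]
    nlinarith
  rw [noiseWeight_eq_mul_succ htT, mul_pow]
  exact mul_le_of_le_one_right (sq_nonneg _) hratio

end noiseWeight

theorem statement_7_general (lam c : ℝ) (hc : 0 < c)
    (T : ℕ) (hT : 1 ≤ T) (Δ : ℕ → ℝ)
    (hΔ : ∀ t, Δ t = (c / t) * ∏ s ∈ Finset.Icc (t + 1) T, (1 - c * lam / s)) :
    (∀ t : ℕ, 1 ≤ t → t + 1 ≤ T → 1 - c * lam / (t + 1 : ℝ) ≠ 0 →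
        (Δ (t + 1)) ^ 2 = (Δ t) ^ 2 * (1 / (1 + (1 - c * lam) / t)) ^ 2) ∧
    (c * lam < 1 →
        (∀ t : ℕ, 1 ≤ t → t + 1 ≤ T → (Δ (t + 1)) ^ 2 < (Δ t) ^ 2) ∧ 0 < (Δ T) ^ 2) ∧
    (c * lam = 1 → ∀ t : ℕ, 1 ≤ t → t ≤ T → Δ t = c / T) ∧
    (1 < c * lam → c * lam < 3 →
        ∀ t : ℕ, 1 ≤ t → t + 1 ≤ T → (Δ t) ^ 2 ≤ (Δ (t + 1)) ^ 2) := by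
  obtain rfl : Δ = noiseWeight c (c * lam) T := funext hΔ
  refine ⟨fun t ht htT ha => sq_noiseWeight_succ ht htT ha, fun ha => ⟨?_, ?_⟩, ?_, ?_⟩
  · exact fun t ht htT => sq_noiseWeight_succ_lt hc ha ht htT
  · exact pow_pos (noiseWeight_pos hc ha hT) 2
  · intro ha t ht htT
    rw [ha]
    exact noiseWeight_one ht htT
  · exact fun ha₁ ha₃ t ht htT => sq_noiseWeight_le_succ ha₁.le ha₃.le ht htT

/-- Properties of the noise accumulation weights
`Δ t = (c/t) ∏_{s=t+1}^T (1 - cλ/s)` of SGD with learning rate `c/t`: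
(i) the ratio identity `Δ_{t+1}² / Δ_t² = (1/(1 + (1-cλ)/t))²` (stated
multiplicatively), (ii) if `cλ < 1` the sequence `Δ_t²` is strictly decreasing
and `Δ_T² > 0`, (iii) if `cλ = 1` then `Δ t = c/T` for all `t`, and (iv) if
`1 < cλ < 3` the sequence `Δ_t²` is nondecreasing. -/
theorem statement_7 (lam c : ℝ) (hlam : 0 < lam) (hc : 0 < c)
    (T : ℕ) (hT : 1 ≤ T) (Δ : ℕ → ℝ)
    (hΔ : ∀ t, Δ t = (c / t) * ∏ s ∈ Finset.Icc (t + 1) T, (1 - c * lam / s)) :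
    (∀ t : ℕ, 1 ≤ t → t + 1 ≤ T → 1 - c * lam / (t + 1 : ℝ) ≠ 0 →
        (Δ (t + 1)) ^ 2 = (Δ t) ^ 2 * (1 / (1 + (1 - c * lam) / t)) ^ 2) ∧
    (c * lam < 1 →
        (∀ t : ℕ, 1 ≤ t → t + 1 ≤ T → (Δ (t + 1)) ^ 2 < (Δ t) ^ 2) ∧ 0 < (Δ T) ^ 2) ∧
    (c * lam = 1 → ∀ t : ℕ, 1 ≤ t → t ≤ T → Δ t = c / T) ∧
    (1 < c * lam → c * lam < 3 →
        ∀ t : ℕ, 1 ≤ t → t + 1 ≤ T → (Δ t) ^ 2 ≤ (Δ (t + 1)) ^ 2) :=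
  statement_7_general lam c hc T hT Δ hΔ
end

section
/- Let λ > 0, 0 < c < 1/λ, T ∈ ℕ with T ≥ 1, and for 1 ≤ t ≤ T define Δ_t = (c/t)·∏_{s=t+1}^{T} (1 − cλ/s) (empty product = 1). Let 0 ≤ V_C ≤ V_N be reals and let 0 ≤ m ≤ T. Then for every function σ : {1,…,T} → {V_C, V_N} that takes the value V_C at exactly m indices, ∑_{t=1}^{m} Δ_t² V_C² + ∑_{t=m+1}^{T} Δ_t² V_N² ≤ ∑_{t=1}^{T} Δ_t² σ(t)². (Processing all clean data before all noisy data minimizes the accumulated noise ∑_t Δ_t² E[‖Z_t‖²] over all orderings when the learning rate constant satisfies c < 1/λ; this is part 1 of the data-order theorem.) -/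
/-!
For `t < T` the weights satisfy `Δ t * t = Δ (t + 1) * (t + 1 - cλ)`, and for `t ≥ T` they are
`c / t`, so `cλ ≤ 1` makes `Δ t ^ 2` nonincreasing on `t ≥ 1`. The accumulated noise equals
`V_N² ∑ Δ² - (V_N² - V_C²) ∑_{clean t} Δ t ²`, and among `m`-element sets of steps the first `m`
carry the largest weight: each clean step beyond `m` can be exchanged for a noisy step among the
first `m`, whose weight is at least as large.
-/

open Finset

noncomputable def sgdNoiseWeight (c lam : ℝ) (T t : ℕ) : ℝ :=
  (c / t) * ∏ s ∈ Icc (t + 1) T, (1 - c * lam / s)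

section SgdNoiseWeight

variable {c lam : ℝ} {T t : ℕ}

theorem sgdNoiseWeight_mul_eq (ht : t ≠ 0) (htT : t < T) :
    sgdNoiseWeight c lam T t * t = sgdNoiseWeight c lam T (t + 1) * (t + 1 - c * lam) := by
  unfold sgdNoiseWeight
  rw [← insert_Icc_add_one_left_eq_Icc (Nat.succ_le_of_lt htT),
    prod_insert (by simp)]
  push_cast
  field_simp

theorem sgdNoiseWeight_of_le (hTt : T ≤ t) : sgdNoiseWeight c lam T t = c / t := by
  simp [sgdNoiseWeight, Icc_eq_empty_of_lt (Nat.lt_succ_of_le hTt)]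

theorem abs_sgdNoiseWeight_succ_le (hcl : c * lam ≤ 1) (ht : 1 ≤ t) :
    |sgdNoiseWeight c lam T (t + 1)| ≤ |sgdNoiseWeight c lam T t| := by
  have ht₀ : (0 : ℝ) < t := by exact_mod_cast ht
  rcases lt_or_ge t T with htT | hTt
  · have hfac : (t : ℝ) ≤ t + 1 - c * lam := by linarith
    have key := congrArg abs (sgdNoiseWeight_mul_eq (c := c) (lam := lam) (by omega) htT)
    rw [abs_mul, abs_mul, abs_of_pos ht₀, abs_of_pos (ht₀.trans_le hfac)] at key
    refine le_of_mul_le_mul_right ?_ ht₀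
    rw [key]
    exact mul_le_mul_of_nonneg_left hfac (abs_nonneg _)
  · rw [sgdNoiseWeight_of_le hTt, sgdNoiseWeight_of_le (by omega), abs_div, abs_div]
    gcongr
    simp

theorem sgdNoiseWeight_sq_antitoneOn (hcl : c * lam ≤ 1) :
    AntitoneOn (fun t ↦ sgdNoiseWeight c lam T t ^ 2) {t | 1 ≤ t} :=
  antitoneOn_nat_Ici_of_succ_le fun _ ht ↦ sq_le_sq.mpr (abs_sgdNoiseWeight_succ_le hcl ht)

end SgdNoiseWeight

theorem sum_le_sum_Icc_one_card_of_antitoneOn {M : Type*} [AddCommMonoid M] [PartialOrder M]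
    [IsOrderedAddMonoid M] {w : ℕ → M} (hw : AntitoneOn w {t | 1 ≤ t}) {A : Finset ℕ}
    (hA : ∀ t ∈ A, 1 ≤ t) : ∑ t ∈ A, w t ≤ ∑ t ∈ Icc 1 #A, w t := by
  set I := Icc 1 #A
  have hcard : #(A \ I) = #(I \ A) := card_sdiff_comm (by simp [I])
  have hout : ∑ t ∈ A \ I, w t ≤ #(A \ I) • w (#A + 1) := by
    refine sum_le_card_nsmul _ _ _ fun t ht ↦ hw (by simp) (hA t (mem_sdiff.1 ht).1) ?_
    have := hA t (mem_sdiff.1 ht).1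
    simp only [I, mem_sdiff, mem_Icc] at ht
    omega
  have hin : #(I \ A) • w (#A + 1) ≤ ∑ t ∈ I \ A, w t := by
    refine card_nsmul_le_sum _ _ _ fun t ht ↦ ?_
    simp only [I, mem_sdiff, mem_Icc] at ht
    exact hw ht.1.1 (by simp) (by omega)
  rw [← sum_inter_add_sum_sdiff A I, ← sum_inter_add_sum_sdiff I A, inter_comm]
  exact add_le_add le_rfl (hout.trans (hcard ▸ hin))

theorem statement_8_general (lam c : ℝ) (hlam : 0 < lam) (hclam : c < 1 / lam)
    (T : ℕ) (Δ : ℕ → ℝ)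
    (hΔ : ∀ t, Δ t = (c / t) * ∏ s ∈ Finset.Icc (t + 1) T, (1 - c * lam / s))
    (VC VN : ℝ) (hVC : 0 ≤ VC) (hVCN : VC ≤ VN)
    (m : ℕ) (hm : m ≤ T)
    (σ : ℕ → ℝ)
    (hσval : ∀ t ∈ Finset.Icc 1 T, σ t = VC ∨ σ t = VN)
    (hσcard : ((Finset.Icc 1 T).filter (fun t => σ t = VC)).card = m) :
    ∑ t ∈ Finset.Icc 1 m, (Δ t) ^ 2 * VC ^ 2 +
        ∑ t ∈ Finset.Icc (m + 1) T, (Δ t) ^ 2 * VN ^ 2 ≤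
      ∑ t ∈ Finset.Icc 1 T, (Δ t) ^ 2 * (σ t) ^ 2 := by
  obtain rfl : Δ = sgdNoiseWeight c lam T := funext hΔ
  set w := fun t ↦ sgdNoiseWeight c lam T t ^ 2
  set A := (Icc 1 T).filter (fun t ↦ σ t = VC)
  set B := (Icc 1 T).filter (fun t ↦ ¬σ t = VC)
  have hclean : ∑ t ∈ A, w t ≤ ∑ t ∈ Icc 1 m, w t := hσcard ▸
    sum_le_sum_Icc_one_card_of_antitoneOn
      (sgdNoiseWeight_sq_antitoneOn ((lt_div_iff₀ hlam).mp hclam).le)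
      fun t ht ↦ (mem_Icc.1 (mem_filter.1 ht).1).1
  have hσsum : ∑ t ∈ Icc 1 T, w t * σ t ^ 2 =
      (∑ t ∈ A, w t) * VC ^ 2 + (∑ t ∈ B, w t) * VN ^ 2 := by
    rw [← sum_filter_add_sum_filter_not _ (fun t ↦ σ t = VC), sum_mul, sum_mul]
    congr 1 <;> refine sum_congr rfl fun t ht ↦ ?_ <;> rw [mem_filter] at ht
    · rw [ht.2]
    · rw [(hσval t ht.1).resolve_left ht.2]
  have htotal :
      ∑ t ∈ Icc 1 m, w t + ∑ t ∈ Icc (m + 1) T, w t = ∑ t ∈ A, w t + ∑ t ∈ B, w t := by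
    rw [sum_filter_add_sum_filter_not, Icc_add_one_left_eq_Ioc, ← Nat.zero_add 1,
      Icc_add_one_left_eq_Ioc, Icc_add_one_left_eq_Ioc, sum_Ioc_consecutive _ (Nat.zero_le m) hm]
  rw [hσsum, ← sum_mul, ← sum_mul]
  nlinarith [mul_le_mul_of_nonneg_left hclean (sub_nonneg.2 (pow_le_pow_left₀ hVC hVCN 2))]

/-- Data-order theorem, part 1 (clean first is optimal for `cλ < 1`): with the
SGD noise weights `Δ t = (c/t) ∏_{s=t+1}^T (1 - cλ/s)` and any assignment `σ` of
noise levels from `{V_C, V_N}` (with `V_C ≤ V_N`) that uses `V_C` at exactly `m`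
indices, the accumulated noise is minimized by placing the clean level `V_C` at
the first `m` steps. -/
theorem statement_8 (lam c : ℝ) (hlam : 0 < lam) (hc : 0 < c) (hclam : c < 1 / lam)
    (T : ℕ) (hT : 1 ≤ T) (Δ : ℕ → ℝ)
    (hΔ : ∀ t, Δ t = (c / t) * ∏ s ∈ Finset.Icc (t + 1) T, (1 - c * lam / s))
    (VC VN : ℝ) (hVC : 0 ≤ VC) (hVCN : VC ≤ VN)
    (m : ℕ) (hm : m ≤ T)
    (σ : ℕ → ℝ)
    (hσval : ∀ t ∈ Finset.Icc 1 T, σ t = VC ∨ σ t = VN)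
    (hσcard : ((Finset.Icc 1 T).filter (fun t => σ t = VC)).card = m) :
    ∑ t ∈ Finset.Icc 1 m, (Δ t) ^ 2 * VC ^ 2 +
        ∑ t ∈ Finset.Icc (m + 1) T, (Δ t) ^ 2 * VN ^ 2 ≤
      ∑ t ∈ Finset.Icc 1 T, (Δ t) ^ 2 * (σ t) ^ 2 :=
  statement_8_general lam c hlam hclam T Δ hΔ VC VN hVC hVCN m hm σ hσval hσcard
end

section
/- Let λ > 0, c > 0 with 1 < cλ < 3, T ∈ ℕ with T ≥ 1, and for 1 ≤ t ≤ T define Δ_t = (c/t)·∏_{s=t+1}^{T} (1 − cλ/s) (empty product = 1). Let 0 ≤ V_C ≤ V_N be reals and let 0 ≤ m ≤ T. Then for every function σ : {1,…,T} → {V_C, V_N} that takes the value V_C at exactly m indices, ∑_{t=1}^{T−m} Δ_t² V_N² + ∑_{t=T−m+1}^{T} Δ_t² V_C² ≤ ∑_{t=1}^{T} Δ_t² σ(t)². (Processing all noisy data before all clean data minimizes the accumulated noise ∑_t Δ_t² E[‖Z_t‖²] over all orderings when the learning rate constant satisfies c > 1/λ; this is part 2 of the data-order theorem.) -/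
/-!
The weights `Δ t ^ 2` are nondecreasing in `t` on `[1, T]`: one step of the product gives
`Δ t = ((t + 1 - cλ) / t) Δ (t + 1)`, and `|t + 1 - cλ| ≤ t` exactly when `1 ≤ cλ ≤ 2t + 1`.
Writing the accumulated noise of `σ` as `V_N² ∑ Δ² - (V_N² - V_C²) ∑_{t ∈ S} Δ_t²`, where `S` is
the set of clean steps, it is minimized by the `m`-subset `S` of largest total weight, which for
nondecreasing weights is the last `m` steps.
-/

open Finset

namespace Finset

lemma sum_le_sum_of_card_eq_of_forall_sdiff_le {ι M : Type*} [DecidableEq ι] [AddCommMonoid M]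
    [LinearOrder M] [IsOrderedAddMonoid M] {S U : Finset ι} {w : ι → M} (hcard : #S = #U)
    (hle : ∀ x ∈ S \ U, ∀ y ∈ U \ S, w x ≤ w y) :
    ∑ x ∈ S, w x ≤ ∑ x ∈ U, w x := by
  rw [← sum_inter_add_sum_sdiff S U, ← sum_inter_add_sum_sdiff U S, inter_comm U S]
  refine add_le_add le_rfl ?_
  obtain hempty | ⟨x₀, hx₀, hmax⟩ := (S \ U).eq_empty_or_nonempty.imp id (exists_max_image _ w)
  · have : U \ S = ∅ := by
      rw [← card_eq_zero, ← card_sdiff_comm hcard, hempty, card_empty]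
    simp [hempty, this]
  · calc ∑ x ∈ S \ U, w x ≤ #(S \ U) • w x₀ := sum_le_card_nsmul _ _ _ hmax
      _ = #(U \ S) • w x₀ := by rw [card_sdiff_comm hcard]
      _ ≤ ∑ y ∈ U \ S, w y := card_nsmul_le_sum _ _ _ fun y hy => hle x₀ hx₀ y hy

lemma sum_eq_sum_sdiff_filter_add_sum_filter {ι α M : Type*} [DecidableEq ι] [DecidableEq α]
    [AddCommMonoid M] {s : Finset ι} {σ : ι → α} {a b : α} (F : ι → α → M)
    (hσ : ∀ t ∈ s, σ t = a ∨ σ t = b) :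
    ∑ t ∈ s, F t (σ t) =
      ∑ t ∈ s \ s.filter (σ · = a), F t b + ∑ t ∈ s.filter (σ · = a), F t a := by
  rw [← filter_not, add_comm, ← sum_filter_add_sum_filter_not s (σ · = a)]
  congr 1
  · exact sum_congr rfl fun t ht => by rw [(mem_filter.mp ht).2]
  · refine sum_congr rfl fun t ht => ?_
    obtain ⟨hts, hta⟩ := mem_filter.mp ht
    rw [(hσ t hts).resolve_left hta]

lemma sum_sdiff_mul_add_sum_mul_le_of_sum_le {ι : Type*} [DecidableEq ι] {s S U : Finset ι}
    {w : ι → ℝ} {a b : ℝ} (hS : S ⊆ s) (hU : U ⊆ s) (hab : a ≤ b)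
    (hSU : ∑ t ∈ S, w t ≤ ∑ t ∈ U, w t) :
    ∑ t ∈ s \ U, w t * b + ∑ t ∈ U, w t * a ≤ ∑ t ∈ s \ S, w t * b + ∑ t ∈ S, w t * a := by
  simp only [← sum_mul, sum_sdiff_eq_sub hS, sum_sdiff_eq_sub hU]
  nlinarith

end Finset

section sgdNoiseWeight

variable {c lam : ℝ} {T t : ℕ}

lemma sgdNoiseWeight_eq_mul_succ (htT : t + 1 ≤ T) :
    sgdNoiseWeight c lam T t = ((t + 1 - c * lam) / t) * sgdNoiseWeight c lam T (t + 1) := by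
  have hsplit : Icc (t + 1) T = insert (t + 1) (Icc (t + 2) T) := by
    ext x; simp only [mem_Icc, mem_insert]; omega
  rw [sgdNoiseWeight, sgdNoiseWeight, hsplit, prod_insert (by simp)]
  push_cast
  field_simp

lemma sgdNoiseWeight_sq_le_succ (h1 : 1 ≤ c * lam) (h2 : c * lam ≤ 2 * t + 1)
    (htT : t + 1 ≤ T) :
    sgdNoiseWeight c lam T t ^ 2 ≤ sgdNoiseWeight c lam T (t + 1) ^ 2 := by
  have hratio : ((t + 1 - c * lam) / t) ^ 2 ≤ (1 : ℝ) := by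
    rw [div_pow]
    refine div_le_one_of_le₀ ?_ (sq_nonneg _)
    nlinarith
  rw [sgdNoiseWeight_eq_mul_succ htT, mul_pow]
  exact mul_le_of_le_one_left (sq_nonneg _) hratio

lemma monotoneOn_sgdNoiseWeight_sq (h1 : 1 ≤ c * lam) (h3 : c * lam ≤ 3) :
    MonotoneOn (fun t => sgdNoiseWeight c lam T t ^ 2) (Set.Icc 1 T) := by
  refine monotoneOn_of_le_add_one Set.ordConnected_Icc fun t _ ht ht' => ?_
  have ht1 : (1 : ℝ) ≤ t := by exact_mod_cast ht.1
  exact sgdNoiseWeight_sq_le_succ h1 (by linarith) ht'.2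

end sgdNoiseWeight

theorem statement_9_general (lam c : ℝ)
    (h1 : 1 < c * lam) (h3 : c * lam < 3)
    (T : ℕ) (Δ : ℕ → ℝ)
    (hΔ : ∀ t, Δ t = (c / t) * ∏ s ∈ Finset.Icc (t + 1) T, (1 - c * lam / s))
    (VC VN : ℝ) (hVC : 0 ≤ VC) (hVCN : VC ≤ VN)
    (m : ℕ) (hm : m ≤ T)
    (σ : ℕ → ℝ)
    (hσval : ∀ t ∈ Finset.Icc 1 T, σ t = VC ∨ σ t = VN)
    (hσcard : ((Finset.Icc 1 T).filter (fun t => σ t = VC)).card = m) :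
    ∑ t ∈ Finset.Icc 1 (T - m), (Δ t) ^ 2 * VN ^ 2 +
        ∑ t ∈ Finset.Icc (T - m + 1) T, (Δ t) ^ 2 * VC ^ 2 ≤
      ∑ t ∈ Finset.Icc 1 T, (Δ t) ^ 2 * (σ t) ^ 2 := by
  obtain rfl : Δ = sgdNoiseWeight c lam T := funext hΔ
  have hmono := monotoneOn_sgdNoiseWeight_sq (T := T) h1.le h3.le
  have hlast : Icc (T - m + 1) T ⊆ Icc 1 T := Icc_subset_Icc_left (by omega)
  have hfirst : Icc 1 (T - m) = Icc 1 T \ Icc (T - m + 1) T := by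
    ext t; simp only [mem_Icc, mem_sdiff]; omega
  have hrearrange : ∑ t ∈ (Icc 1 T).filter (fun t => σ t = VC), sgdNoiseWeight c lam T t ^ 2 ≤
      ∑ t ∈ Icc (T - m + 1) T, sgdNoiseWeight c lam T t ^ 2 := by
    refine sum_le_sum_of_card_eq_of_forall_sdiff_le (by rw [hσcard, Nat.card_Icc]; omega)
      fun x hx y hy => ?_
    obtain ⟨hxS, hxU⟩ := mem_sdiff.mp hx
    have hxT := mem_Icc.mp (mem_filter.mp hxS).1
    have hyU := mem_Icc.mp (mem_sdiff.mp hy).1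
    have hxU' : x ≤ T - m := by by_contra; exact hxU (mem_Icc.mpr ⟨by omega, hxT.2⟩)
    exact hmono ⟨hxT.1, hxT.2⟩ ⟨by omega, hyU.2⟩ (by omega)
  rw [hfirst, sum_eq_sum_sdiff_filter_add_sum_filter
    (fun t v => sgdNoiseWeight c lam T t ^ 2 * v ^ 2) hσval]
  exact sum_sdiff_mul_add_sum_mul_le_of_sum_le (filter_subset _ _) hlast
    (pow_le_pow_left₀ hVC hVCN 2) hrearrange

/-- Data-order theorem, part 2 (noisy first is optimal for `1 < cλ < 3`): with
the SGD noise weights `Δ t = (c/t) ∏_{s=t+1}^T (1 - cλ/s)` and any assignment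
`σ` of noise levels from `{V_C, V_N}` (with `V_C ≤ V_N`) that uses `V_C` at
exactly `m` indices, the accumulated noise is minimized by placing the noisy
level `V_N` at the first `T - m` steps and the clean level `V_C` at the last
`m` steps. -/
theorem statement_9 (lam c : ℝ) (hlam : 0 < lam) (hc : 0 < c)
    (h1 : 1 < c * lam) (h3 : c * lam < 3)
    (T : ℕ) (hT : 1 ≤ T) (Δ : ℕ → ℝ)
    (hΔ : ∀ t, Δ t = (c / t) * ∏ s ∈ Finset.Icc (t + 1) T, (1 - c * lam / s))
    (VC VN : ℝ) (hVC : 0 ≤ VC) (hVCN : VC ≤ VN)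
    (m : ℕ) (hm : m ≤ T)
    (σ : ℕ → ℝ)
    (hσval : ∀ t ∈ Finset.Icc 1 T, σ t = VC ∨ σ t = VN)
    (hσcard : ((Finset.Icc 1 T).filter (fun t => σ t = VC)).card = m) :
    ∑ t ∈ Finset.Icc 1 (T - m), (Δ t) ^ 2 * VN ^ 2 +
        ∑ t ∈ Finset.Icc (T - m + 1) T, (Δ t) ^ 2 * VC ^ 2 ≤
      ∑ t ∈ Finset.Icc 1 T, (Δ t) ^ 2 * (σ t) ^ 2 :=
  statement_9_general lam c h1 h3 T Δ hΔ VC VN hVC hVCN m hm σ hσval hσcard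
end

section
/- Let λ, c₁, c₂, Γ₁, Γ₂, B > 0 with 2λc₁ > 1 and 2λc₂ ≠ 1, let β₁ ∈ (0,1), and set i₀ = ⌈2λc₁⌉. Then there exist constants C > 0 and T₀ ∈ ℕ such that for every integer T ≥ T₀ with β₁T ∈ ℕ and every sequence of nonnegative reals (a_t)_{t=i₀}^{T+1} with a_{i₀} ≤ 4B², a_{t+1} ≤ (1 − 2λc₁/t) a_t + c₁²Γ₁²/t² for i₀ ≤ t ≤ β₁T, and a_{t+1} ≤ (1 − 2λc₂/t) a_t + c₂²Γ₂²/t² for β₁T < t ≤ T, one has a_{T+1} ≤ (1/T)·[ 4Γ₁² β₁^{2λc₂−1} c₁²/(2λc₁ − 1) + 4Γ₂² (1 − β₁^{2λc₂−1}) c₂²/(2λc₂ − 1) ] + C / T^{min(2, 2λc₁)}. -/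
/-!
Write `α = 2λc` and `ν = c²Γ²/(α - 1)`, so that each recursion reads
`a_{t+1} ≤ (1 - α/t) a_t + (α - 1) ν / t²`. The profile `ν/t` solves it up to a defect
`ν / (t²(t+1))`, and the homogeneous part decays like `t^{-α}`, by the Bernoulli-type bounds
`(1 - α/t) t^{-α} ≤ (t+1)^{-α} ≤ (1 - α/t) t^{-α} + α(α+1) t^{-α-2}`.

In the first phase this yields `a_t ≤ ν₁/t + μ t^{-q}` with `q = min 2 α₁` by induction. In the
second phase, started at `s = βT + 1` with deviation `e = a_s - ν₂/s = O(1/s)`, it yields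
`a_t ≤ ν₂/t + e (s/t)^{α₂} + (t - s) δ` with `δ = O(s⁻³)`. At `t = T + 1` the middle term is
`(ν₁ - ν₂) (s/(T+1))^{α₂-1} / (T+1) + O(T^{-q})`, and since `s/(T+1) - β = (1 - β)/(T+1)`, the
Lipschitz bound for `x ↦ x^{α₂-1}` on `[β, 1]` replaces `s/(T+1)` by `β` at a cost `O(T⁻²)`.
-/

open Real Set

theorem one_add_mul_sub_one_le_rpow {x p : ℝ} (hx : 0 < x) (hp : p ≤ 0) :
    1 + p * (x - 1) ≤ x ^ p := by
  rw [rpow_def_of_pos hx]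
  calc 1 + p * (x - 1) ≤ log x * p + 1 := by nlinarith [log_le_sub_one_of_pos hx]
    _ ≤ exp (log x * p) := add_one_le_exp _

theorem rpow_neg_mul_one_sub_le {x y c : ℝ} (hx : 0 < x) (hy : 0 < y) (hc : 0 ≤ c) :
    x ^ (-c) * (1 - c * (y - x) / x) ≤ y ^ (-c) := by
  have h := one_add_mul_sub_one_le_rpow (div_pos hy hx) (neg_nonpos.2 hc)
  rw [div_rpow hy.le hx.le, le_div_iff₀ (rpow_pos_of_pos hx _)] at h
  have hrw : 1 + -c * (y / x - 1) = 1 - c * (y - x) / x := by field_simp; ring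
  rw [hrw] at h
  linarith

theorem one_sub_div_mul_rpow_neg_le {t c : ℝ} (ht : 0 < t) (hc : 0 ≤ c) :
    (1 - c / t) * t ^ (-c) ≤ (t + 1) ^ (-c) := by
  have h := rpow_neg_mul_one_sub_le ht (by linarith : 0 < t + 1) hc
  rw [add_sub_cancel_left, mul_one] at h
  linarith

theorem rpow_neg_succ_le {t c : ℝ} (ht : 0 < t) (hc : 0 ≤ c) :
    (t + 1) ^ (-c) ≤ (1 - c / t) * t ^ (-c) + c * (c + 1) * t ^ (-c) / t ^ 2 := by
  have h := rpow_neg_mul_one_sub_le (by linarith : 0 < t + 1) ht hc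
  have hrw : 1 - c * (t - (t + 1)) / (t + 1) = (t + 1 + c) / (t + 1) := by field_simp; ring
  rw [hrw, ← le_div_iff₀ (by positivity), div_div_eq_mul_div] at h
  have hfactor : (t + 1) / (t + 1 + c) = 1 - c / t + c * (c + 1) / (t * (t + 1 + c)) := by
    field_simp; ring
  calc (t + 1) ^ (-c) ≤ t ^ (-c) * ((t + 1) / (t + 1 + c)) := by rwa [mul_div_assoc] at h
    _ = t ^ (-c) * (1 - c / t + c * (c + 1) / (t * (t + 1 + c))) := by rw [hfactor]
    _ ≤ t ^ (-c) * (1 - c / t + c * (c + 1) / t ^ 2) := by gcongr; nlinarith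
    _ = _ := by ring

theorem one_sub_div_mul_div_rpow_le {s t c : ℝ} (hs : 0 < s) (hst : s ≤ t) (hc : 0 ≤ c)
    (e : ℝ) :
    (1 - c / t) * (e * (s / t) ^ c) ≤ e * (s / (t + 1)) ^ c + c * (c + 1) * |e| / s ^ 2 := by
  have ht : 0 < t := hs.trans_le hst
  have hsc : 0 ≤ s ^ c := rpow_nonneg hs.le c
  have hratio : ∀ u, 0 < u → (s / u) ^ c = s ^ c * u ^ (-c) := fun u hu => by
    rw [div_rpow hs.le hu.le, rpow_neg hu.le, div_eq_mul_inv]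
  have hle_one : (s / t) ^ c ≤ 1 := rpow_le_one (by positivity) ((div_le_one ht).2 hst) hc
  set x := (1 - c / t) * (s / t) ^ c
  set y := (s / (t + 1)) ^ c
  have hxy : x ≤ y := by
    simp only [x, y, hratio t ht, hratio (t + 1) (by linarith)]
    linarith [mul_le_mul_of_nonneg_left (one_sub_div_mul_rpow_neg_le ht hc) hsc]
  have hyx : y ≤ x + c * (c + 1) * (s / t) ^ c / t ^ 2 := by
    simp only [x, y, hratio t ht, hratio (t + 1) (by linarith)]
    exact (mul_le_mul_of_nonneg_left (rpow_neg_succ_le ht hc) hsc).trans_eq (by ring)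
  have hdecay : c * (c + 1) * (s / t) ^ c / t ^ 2 ≤ c * (c + 1) * 1 / s ^ 2 := by gcongr
  rw [mul_one] at hdecay
  calc (1 - c / t) * (e * (s / t) ^ c) = e * y - e * (y - x) := by ring
    _ ≤ e * y + |e| * (y - x) := by
        linarith [mul_le_mul_of_nonneg_right (neg_le_abs e) (sub_nonneg.2 hxy)]
    _ ≤ e * y + |e| * (c * (c + 1) / s ^ 2) := by gcongr; linarith
    _ = _ := by ring

theorem one_sub_div_mul_div_add_sub_one_mul_div_sq {α ν t : ℝ} (ht : 0 < t) :
    (1 - α / t) * (ν / t) + (α - 1) * ν / t ^ 2 = ν / (t + 1) - ν / (t ^ 2 * (t + 1)) := by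
  field_simp
  ring

theorem first_phase_bound {α q ν μ G : ℝ} {a : ℕ → ℝ} {n m : ℕ} (hn : 0 < n)
    (hαn : α ≤ n) (hq : 0 ≤ q) (hqα : q ≤ α) (hν : 0 ≤ ν) (hμ : 0 ≤ μ)
    (hG : (α - 1) * ν = G) (h_start : a n ≤ ν / n + μ * (n : ℝ) ^ (-q))
    (hrec : ∀ t : ℕ, n ≤ t → t ≤ m → a (t + 1) ≤ (1 - α / t) * a t + G / (t : ℝ) ^ 2) :
    ∀ t : ℕ, n ≤ t → t ≤ m + 1 → a t ≤ ν / t + μ * (t : ℝ) ^ (-q) := by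
  intro t hnt
  induction t, hnt using Nat.le_induction with
  | base => exact fun _ => h_start
  | succ t hnt ih =>
    intro htm
    have ht : (0 : ℝ) < t := by exact_mod_cast hn.trans_le hnt
    have hcontr : 0 ≤ 1 - α / t := by
      rw [sub_nonneg, div_le_one ht]; exact hαn.trans (by exact_mod_cast hnt)
    have hforcing : (1 - α / t) * (ν / t) + G / (t : ℝ) ^ 2 ≤ ν / (t + 1) := by
      rw [← hG, one_sub_div_mul_div_add_sub_one_mul_div_sq ht]
      have : 0 ≤ ν / ((t : ℝ) ^ 2 * (t + 1)) := by positivity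
      linarith
    have hdecay : (1 - α / t) * (μ * (t : ℝ) ^ (-q)) ≤ μ * ((t : ℝ) + 1) ^ (-q) := by
      have hαq : 1 - α / t ≤ 1 - q / t := by gcongr
      calc (1 - α / t) * (μ * (t : ℝ) ^ (-q)) ≤ μ * ((1 - q / t) * (t : ℝ) ^ (-q)) := by
            rw [mul_left_comm]; gcongr
        _ ≤ μ * ((t : ℝ) + 1) ^ (-q) := by gcongr; exact one_sub_div_mul_rpow_neg_le ht hq
    push_cast
    calc a (t + 1) ≤ (1 - α / t) * a t + G / (t : ℝ) ^ 2 := hrec t hnt (by omega)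
      _ ≤ (1 - α / t) * (ν / t + μ * (t : ℝ) ^ (-q)) + G / (t : ℝ) ^ 2 := by
          gcongr; exact ih (by omega)
      _ ≤ ν / (t + 1) + μ * ((t : ℝ) + 1) ^ (-q) := by linarith

theorem second_phase_bound {α ν e G : ℝ} {a : ℕ → ℝ} {s T : ℕ} (hs : 0 < s)
    (hα : 0 ≤ α) (hαs : α ≤ s) (hG : (α - 1) * ν = G) (h_start : a s ≤ ν / s + e)
    (hrec : ∀ t : ℕ, s ≤ t → t ≤ T → a (t + 1) ≤ (1 - α / t) * a t + G / (t : ℝ) ^ 2) :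
    ∀ t : ℕ, s ≤ t → t ≤ T + 1 →
      a t ≤ ν / t + e * ((s : ℝ) / t) ^ α
        + (t - s) * (|ν| / (s : ℝ) ^ 3 + α * (α + 1) * |e| / (s : ℝ) ^ 2) := by
  set δ := |ν| / (s : ℝ) ^ 3 + α * (α + 1) * |e| / (s : ℝ) ^ 2
  have hs' : (0 : ℝ) < s := by exact_mod_cast hs
  intro t hst
  induction t, hst using Nat.le_induction with
  | base => intro _; simp [div_self hs'.ne', h_start]
  | succ t hst ih =>
    intro htT
    have hst' : (s : ℝ) ≤ t := by exact_mod_cast hst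
    have ht : (0 : ℝ) < t := hs'.trans_le hst'
    have hcontr : 0 ≤ 1 - α / t := by rw [sub_nonneg, div_le_one ht]; linarith
    have hforcing : (1 - α / t) * (ν / t) + G / (t : ℝ) ^ 2 ≤ ν / (t + 1) + |ν| / (s : ℝ) ^ 3 := by
      rw [← hG, one_sub_div_mul_div_add_sub_one_mul_div_sq ht]
      have : -(ν / ((t : ℝ) ^ 2 * (t + 1))) ≤ |ν| / (s : ℝ) ^ 3 := by
        rw [← neg_div]
        refine (div_le_div_of_nonneg_right (neg_le_abs ν) (by positivity)).trans ?_
        gcongr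
        nlinarith [pow_le_pow_left₀ hs'.le hst' 2]
      linarith
    have hdrift : (1 - α / t) * ((t - s) * δ) ≤ (t - s) * δ :=
      mul_le_of_le_one_left (by positivity) (by linarith [div_nonneg hα ht.le])
    push_cast
    calc a (t + 1) ≤ (1 - α / t) * a t + G / (t : ℝ) ^ 2 := hrec t hst (by omega)
      _ ≤ (1 - α / t) * (ν / t + e * ((s : ℝ) / t) ^ α + (t - s) * δ) + G / (t : ℝ) ^ 2 := by
          gcongr; exact ih (by omega)
      _ ≤ ν / (t + 1) + e * ((s : ℝ) / (t + 1)) ^ α + (t + 1 - s) * δ := by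
          linarith [one_sub_div_mul_div_rpow_le hs' hst' hα e]

theorem abs_rpow_sub_rpow_le {b p x y : ℝ} (hb : 0 < b) (hx : x ∈ Icc b 1) (hy : y ∈ Icc b 1) :
    |x ^ p - y ^ p| ≤ |p| * (b ^ (p - 1) + 1) * |x - y| := by
  have hderiv_le : ∀ z ∈ Icc b 1, ‖p * z ^ (p - 1)‖ ≤ |p| * (b ^ (p - 1) + 1) := by
    intro z hz
    have hz0 : 0 < z := hb.trans_le hz.1
    have hbound : z ^ (p - 1) ≤ b ^ (p - 1) + 1 := by
      rcases le_or_gt (p - 1) 0 with hp | hp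
      · linarith [rpow_le_rpow_of_nonpos hb hz.1 hp, rpow_nonneg hb.le (p - 1)]
      · linarith [rpow_le_one hz0.le hz.2 hp.le, rpow_nonneg hb.le (p - 1)]
    rw [norm_mul, norm_eq_abs, norm_of_nonneg (rpow_nonneg hz0.le _)]
    gcongr
  simpa [norm_eq_abs] using (convex_Icc b 1).norm_image_sub_le_of_norm_hasDerivWithin_le
    (fun z hz => (hasDerivAt_rpow_const (Or.inl (hb.trans_le hz.1).ne')).hasDerivWithinAt)
    hderiv_le hy hx

theorem div_sub_one_mul_one_sub_rpow_nonneg {G α β : ℝ} (hG : 0 ≤ G) (hβ : β ∈ Ioc 0 1) :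
    0 ≤ G / (α - 1) * (1 - β ^ (α - 1)) := by
  rcases le_total α 1 with hα | hα
  · exact mul_nonneg_of_nonpos_of_nonpos (div_nonpos_of_nonneg_of_nonpos hG (by linarith))
      (sub_nonpos.2 (one_le_rpow_of_pos_of_le_one_of_nonpos hβ.1 hβ.2 (by linarith)))
  · exact mul_nonneg (div_nonneg hG (by linarith))
      (sub_nonneg.2 (rpow_le_one hβ.1.le hβ.2 (by linarith)))

theorem two_phase_leading_term_le {p ν₁ ν₂ β T : ℝ} (hβ : β ∈ Ioc 0 1) (hT : 0 < T)
    (hX : 0 ≤ ν₁ * β ^ p + ν₂ * (1 - β ^ p)) :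
    (ν₂ + (ν₁ - ν₂) * ((β * T + 1) / (T + 1)) ^ p) / (T + 1) ≤
      (ν₁ * β ^ p + ν₂ * (1 - β ^ p)) / T
        + |ν₁ - ν₂| * (|p| * (β ^ (p - 1) + 1)) * (1 - β) / T ^ 2 := by
  obtain ⟨hβ0, hβ1⟩ := hβ
  have hr : (β * T + 1) / (T + 1) - β = (1 - β) / (T + 1) := by field_simp; ring
  have hr_mem : (β * T + 1) / (T + 1) ∈ Icc β 1 := by
    constructor
    · nlinarith [div_nonneg (by linarith : 0 ≤ 1 - β) (by linarith : 0 ≤ T + 1)]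
    · rw [div_le_one (by linarith)]; nlinarith
  set r := (β * T + 1) / (T + 1)
  set X := ν₁ * β ^ p + ν₂ * (1 - β ^ p)
  set L := |p| * (β ^ (p - 1) + 1)
  have hlip : (ν₁ - ν₂) * (r ^ p - β ^ p) ≤ |ν₁ - ν₂| * L * (1 - β) / (T + 1) := by
    calc (ν₁ - ν₂) * (r ^ p - β ^ p) ≤ |ν₁ - ν₂| * |r ^ p - β ^ p| := by
          rw [← abs_mul]; exact le_abs_self _
      _ ≤ |ν₁ - ν₂| * (L * |r - β|) := by
          gcongr; exact abs_rpow_sub_rpow_le hβ0 hr_mem ⟨le_rfl, hβ1⟩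
      _ = |ν₁ - ν₂| * L * (1 - β) / (T + 1) := by
          rw [hr, abs_of_nonneg (div_nonneg (sub_nonneg.2 hβ1) (by positivity))]; ring
  have hE : 0 ≤ |ν₁ - ν₂| * L * (1 - β) := mul_nonneg (by positivity) (by linarith)
  calc (ν₂ + (ν₁ - ν₂) * r ^ p) / (T + 1)
      = X / (T + 1) + (ν₁ - ν₂) * (r ^ p - β ^ p) / (T + 1) := by ring
    _ ≤ X / (T + 1) + |ν₁ - ν₂| * L * (1 - β) / (T + 1) / (T + 1) := by gcongr
    _ ≤ X / T + |ν₁ - ν₂| * L * (1 - β) / T ^ 2 := by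
        rw [div_div, ← sq]
        gcongr <;> linarith

theorem two_phase_transient_term_le {α q ν₁ ν₂ μ β T s x : ℝ} (hα : 0 ≤ α) (hq : 0 ≤ q) (hμ : 0 ≤ μ)
    (hβ : β ∈ Ioc 0 1) (hT : 0 < T) (hs : s = β * T + 1) (hx : x ≤ ν₁ / s + μ * s ^ (-q)) :
    (x - ν₂ / s) * (s / (T + 1)) ^ α
      ≤ (ν₁ - ν₂) * (s / (T + 1)) ^ (α - 1) / (T + 1) + μ * β ^ (-q) / T ^ q := by
  obtain ⟨hβ0, hβ1⟩ := hβ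
  have hβT : 0 < β * T := by positivity
  have hs0 : 0 < s := by linarith
  have hr0 : 0 < s / (T + 1) := by positivity
  have hr1 : s / (T + 1) ≤ 1 := by rw [div_le_one (by linarith)]; nlinarith
  have hr_split : (ν₁ - ν₂) / s * (s / (T + 1)) ^ α
      = (ν₁ - ν₂) * (s / (T + 1)) ^ (α - 1) / (T + 1) := by
    rw [rpow_sub_one hr0.ne']
    field_simp
  have hinit : μ * s ^ (-q) * (s / (T + 1)) ^ α ≤ μ * β ^ (-q) / T ^ q := by
    calc μ * s ^ (-q) * (s / (T + 1)) ^ α ≤ μ * (β * T) ^ (-q) * 1 := by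
          have hdecay : s ^ (-q) ≤ (β * T) ^ (-q) :=
            rpow_le_rpow_of_nonpos hβT (by linarith) (by linarith)
          exact mul_le_mul (by gcongr) (rpow_le_one hr0.le hr1 hα) (by positivity)
            (by positivity)
      _ = μ * β ^ (-q) / T ^ q := by
          rw [mul_rpow hβ0.le hT.le, rpow_neg hT.le]; ring
  calc (x - ν₂ / s) * (s / (T + 1)) ^ α
      ≤ ((ν₁ - ν₂) / s + μ * s ^ (-q)) * (s / (T + 1)) ^ α := by
        gcongr; linarith [sub_div ν₁ ν₂ s]
    _ = (ν₁ - ν₂) / s * (s / (T + 1)) ^ α + μ * s ^ (-q) * (s / (T + 1)) ^ α := by ring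
    _ ≤ _ := by rw [hr_split]; linarith

theorem two_phase_drift_term_le {α q ν₁ ν₂ μ β T s x : ℝ} (hα : 0 ≤ α) (hq : 1 ≤ q) (hμ : 0 ≤ μ)
    (hβ : 0 < β) (hT : 0 < T) (hs : s = β * T + 1) (hx₀ : 0 ≤ x)
    (hx : x ≤ ν₁ / s + μ * s ^ (-q)) :
    (T + 1 - s) * (|ν₂| / s ^ 3 + α * (α + 1) * |x - ν₂ / s| / s ^ 2)
      ≤ (|ν₂| + α * (α + 1) * (ν₁ + μ + |ν₂|)) / β ^ 3 / T ^ 2 := by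
  have hβT : 0 < β * T := by positivity
  have hs1 : 1 ≤ s := by linarith
  have hs0 : 0 < s := by linarith
  have hdev : |x - ν₂ / s| ≤ (ν₁ + μ + |ν₂|) / s := by
    have hinit : s ^ (-q) ≤ s ^ (-1 : ℝ) := rpow_le_rpow_of_exponent_le hs1 (by linarith)
    rw [rpow_neg_one] at hinit
    calc |x - ν₂ / s| ≤ x + |ν₂| / s := by
          refine (abs_sub _ _).trans_eq ?_
          rw [abs_of_nonneg hx₀, abs_div, abs_of_pos hs0]
      _ ≤ ν₁ / s + μ * s⁻¹ + |ν₂| / s := by gcongr; linarith [mul_le_mul_of_nonneg_left hinit hμ]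
      _ = (ν₁ + μ + |ν₂|) / s := by ring
  set V := |ν₂| + α * (α + 1) * (ν₁ + μ + |ν₂|)
  have hrate : |ν₂| / s ^ 3 + α * (α + 1) * |x - ν₂ / s| / s ^ 2 ≤ V / s ^ 3 := by
    have hK : 0 ≤ α * (α + 1) := by positivity
    calc |ν₂| / s ^ 3 + α * (α + 1) * |x - ν₂ / s| / s ^ 2
        ≤ |ν₂| / s ^ 3 + α * (α + 1) * ((ν₁ + μ + |ν₂|) / s) / s ^ 2 := by gcongr
      _ = V / s ^ 3 := by field_simp; ring
  have hV : 0 ≤ V := by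
    have : 0 ≤ ν₁ + μ + |ν₂| := by
      simpa using (le_div_iff₀ hs0).1 ((abs_nonneg _).trans hdev)
    positivity
  calc (T + 1 - s) * (|ν₂| / s ^ 3 + α * (α + 1) * |x - ν₂ / s| / s ^ 2)
      ≤ T * (V / (β * T) ^ 3) := by
        refine mul_le_mul (by linarith) (hrate.trans ?_) (by positivity) hT.le
        gcongr
        linarith
    _ = V / β ^ 3 / T ^ 2 := by field_simp

theorem exists_two_phase_bound {α q ν₁ ν₂ μ β : ℝ} (hα : 0 ≤ α) (hq₁ : 1 ≤ q) (hq₂ : q ≤ 2)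
    (hν₁ : 0 ≤ ν₁) (hμ : 0 < μ) (hβ : β ∈ Ioc 0 1)
    (hX : 0 ≤ ν₁ * β ^ (α - 1) + ν₂ * (1 - β ^ (α - 1))) :
    ∃ C > 0, ∀ T s x y : ℝ, 1 ≤ T → s = β * T + 1 → 0 ≤ x → x ≤ ν₁ / s + μ * s ^ (-q) →
      y ≤ ν₂ / (T + 1) + (x - ν₂ / s) * (s / (T + 1)) ^ α
        + (T + 1 - s) * (|ν₂| / s ^ 3 + α * (α + 1) * |x - ν₂ / s| / s ^ 2) →
      y ≤ (ν₁ * β ^ (α - 1) + ν₂ * (1 - β ^ (α - 1))) / T + C / T ^ q := by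
  obtain ⟨hβ0, hβ1⟩ := hβ
  set E₁ := |ν₁ - ν₂| * (|α - 1| * (β ^ (α - 1 - 1) + 1)) * (1 - β)
  set E₂ := μ * β ^ (-q)
  set E₃ := (|ν₂| + α * (α + 1) * (ν₁ + μ + |ν₂|)) / β ^ 3
  have hE₁ : 0 ≤ E₁ := mul_nonneg (by positivity) (by linarith)
  refine ⟨E₁ + E₂ + E₃, by positivity, fun T s x y hT hs hx₀ hx hy => ?_⟩
  have hT0 : 0 < T := by linarith
  have hmain := two_phase_leading_term_le (p := α - 1) (ν₁ := ν₁) (ν₂ := ν₂) ⟨hβ0, hβ1⟩ hT0 hX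
  have hhead := two_phase_transient_term_le (ν₂ := ν₂) hα (by linarith) hμ.le ⟨hβ0, hβ1⟩ hT0 hs hx
  have hdrift := two_phase_drift_term_le (ν₂ := ν₂) hα hq₁ hμ.le hβ0 hT0 hs hx₀ hx
  rw [← hs] at hmain
  have hsq : ∀ E, 0 ≤ E → E / T ^ 2 ≤ E / T ^ q := fun E hE => by
    gcongr
    rw [← rpow_natCast]
    exact rpow_le_rpow_of_exponent_le hT (by norm_num; linarith)
  have hE₃ : 0 ≤ E₃ := by positivity
  calc y ≤ (ν₂ + (ν₁ - ν₂) * (s / (T + 1)) ^ (α - 1)) / (T + 1) + E₂ / T ^ q + E₃ / T ^ 2 := by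
        rw [add_div]; linarith
    _ ≤ (ν₁ * β ^ (α - 1) + ν₂ * (1 - β ^ (α - 1))) / T + E₁ / T ^ 2 + E₂ / T ^ q
          + E₃ / T ^ 2 := by linarith
    _ ≤ _ := by rw [add_div (E₁ + E₂), add_div E₁]; linarith [hsq E₁ hE₁, hsq E₃ hE₃]

theorem statement_12_general (lam c1 c2 Γ1 Γ2 B : ℝ)
    (hlam : 0 < lam) (hc2 : 0 < c2)
    (hB : 0 < B)
    (h1 : 1 < 2 * lam * c1) (h2 : 2 * lam * c2 ≠ 1)
    (β : ℝ) (hβ : β ∈ Set.Ioo (0 : ℝ) 1) :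
    ∃ C : ℝ, 0 < C ∧ ∃ T0 : ℕ, ∀ T : ℕ, T0 ≤ T →
      ∀ m : ℕ, (m : ℝ) = β * T →
        ∀ a : ℕ → ℝ,
          (∀ t, ⌈2 * lam * c1⌉₊ ≤ t → t ≤ T + 1 → 0 ≤ a t) →
          a ⌈2 * lam * c1⌉₊ ≤ 4 * B ^ 2 →
          (∀ t, ⌈2 * lam * c1⌉₊ ≤ t → t ≤ m →
            a (t + 1) ≤ (1 - 2 * lam * c1 / t) * a t + c1 ^ 2 * Γ1 ^ 2 / (t : ℝ) ^ 2) →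
          (∀ t, m < t → t ≤ T →
            a (t + 1) ≤ (1 - 2 * lam * c2 / t) * a t + c2 ^ 2 * Γ2 ^ 2 / (t : ℝ) ^ 2) →
          a (T + 1) ≤
            (1 / T) * (4 * Γ1 ^ 2 * β ^ (2 * lam * c2 - 1) * c1 ^ 2 / (2 * lam * c1 - 1) +
                4 * Γ2 ^ 2 * (1 - β ^ (2 * lam * c2 - 1)) * c2 ^ 2 / (2 * lam * c2 - 1)) +
              C / (T : ℝ) ^ (min (2 : ℝ) (2 * lam * c1)) := by
  obtain ⟨hβ0, hβ1⟩ := hβ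
  have hα₂ : 0 < 2 * lam * c2 := by positivity
  set n₀ := ⌈2 * lam * c1⌉₊
  have hn₀ : 2 * lam * c1 ≤ n₀ := Nat.le_ceil _
  have hn₀_pos : 0 < n₀ := Nat.ceil_pos.2 (by linarith)
  set q := min (2 : ℝ) (2 * lam * c1)
  set μ := 4 * B ^ 2 * (n₀ : ℝ) ^ q
  set ν₁ := c1 ^ 2 * Γ1 ^ 2 / (2 * lam * c1 - 1)
  set ν₂ := c2 ^ 2 * Γ2 ^ 2 / (2 * lam * c2 - 1)
  have hν₁ : 0 ≤ ν₁ := div_nonneg (by positivity) (by linarith)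
  have hX : 0 ≤ ν₁ * β ^ (2 * lam * c2 - 1) + ν₂ * (1 - β ^ (2 * lam * c2 - 1)) :=
    add_nonneg (mul_nonneg hν₁ (rpow_nonneg hβ0.le _))
      (div_sub_one_mul_one_sub_rpow_nonneg (by positivity) ⟨hβ0, hβ1.le⟩)
  obtain ⟨C, hC, hbound⟩ := exists_two_phase_bound hα₂.le (le_min one_le_two h1.le)
    (min_le_left _ _) hν₁ (by positivity : 0 < μ) ⟨hβ0, hβ1.le⟩ hX
  refine ⟨C, hC, ⌈(n₀ + 2 * lam * c2) / β⌉₊,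
    fun T hT m hm a ha_nonneg ha_start hrec₁ hrec₂ => ?_⟩
  have hβT : n₀ + 2 * lam * c2 ≤ β * T := by
    linarith [(div_le_iff₀ hβ0).1 (Nat.ceil_le.1 hT)]
  have hmT : (m : ℝ) ≤ T := by rw [hm]; nlinarith
  have hn₀m : n₀ ≤ m := by exact_mod_cast (by linarith : (n₀ : ℝ) ≤ m)
  have hmT' : m ≤ T := by exact_mod_cast hmT
  have h_start : a n₀ ≤ ν₁ / n₀ + μ * (n₀ : ℝ) ^ (-q) := by
    rw [mul_assoc, ← rpow_add (by positivity), add_neg_cancel, rpow_zero, mul_one]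
    linarith [div_nonneg hν₁ (Nat.cast_nonneg n₀)]
  have h₁ := first_phase_bound hn₀_pos hn₀ (le_min zero_le_two (by linarith))
    (min_le_right _ _) hν₁ (by positivity) (mul_div_cancel₀ _ (by linarith)) h_start hrec₁
    (m + 1) (by omega) le_rfl
  have h₂ := second_phase_bound (e := a (m + 1) - ν₂ / ((m + 1 : ℕ) : ℝ))
    (Nat.succ_pos m) hα₂.le (by push_cast; linarith) (mul_div_cancel₀ _ (sub_ne_zero.2 h2))
    (by linarith) hrec₂ (T + 1) (by omega) le_rfl
  push_cast at h₁ h₂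
  have := hbound T (m + 1) (a (m + 1)) (a (T + 1)) (by linarith) (by rw [hm])
    (ha_nonneg _ (by omega) (by omega)) h₁ h₂
  refine this.trans (add_le_add_left ?_ _)
  calc (ν₁ * β ^ (2 * lam * c2 - 1) + ν₂ * (1 - β ^ (2 * lam * c2 - 1))) / T
      ≤ 4 * (ν₁ * β ^ (2 * lam * c2 - 1) + ν₂ * (1 - β ^ (2 * lam * c2 - 1))) / T := by
        gcongr; linarith
    _ = _ := by simp only [ν₁, ν₂]; ring

/-- Regret bound for two-phase SGD with heterogeneous noise (case `2λc₂ ≠ 1`):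
any nonnegative sequence satisfying the error recursions with learning rates
`c₁/t` (noise `Γ₁`) on the first `β₁T` steps and `c₂/t` (noise `Γ₂`) on the
remaining steps, started from `a_{i₀} ≤ 4B²`, satisfies
`a_{T+1} ≤ (1/T)[4Γ₁²β₁^{2λc₂-1}c₁²/(2λc₁-1) + 4Γ₂²(1-β₁^{2λc₂-1})c₂²/(2λc₂-1)]
            + C/T^{min(2,2λc₁)}`. -/
theorem statement_12 (lam c1 c2 Γ1 Γ2 B : ℝ)
    (hlam : 0 < lam) (hc1 : 0 < c1) (hc2 : 0 < c2)
    (hΓ1 : 0 < Γ1) (hΓ2 : 0 < Γ2) (hB : 0 < B)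
    (h1 : 1 < 2 * lam * c1) (h2 : 2 * lam * c2 ≠ 1)
    (β : ℝ) (hβ : β ∈ Set.Ioo (0 : ℝ) 1) :
    ∃ C : ℝ, 0 < C ∧ ∃ T0 : ℕ, ∀ T : ℕ, T0 ≤ T →
      ∀ m : ℕ, (m : ℝ) = β * T →
        ∀ a : ℕ → ℝ,
          (∀ t, ⌈2 * lam * c1⌉₊ ≤ t → t ≤ T + 1 → 0 ≤ a t) →
          a ⌈2 * lam * c1⌉₊ ≤ 4 * B ^ 2 →
          (∀ t, ⌈2 * lam * c1⌉₊ ≤ t → t ≤ m →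
            a (t + 1) ≤ (1 - 2 * lam * c1 / t) * a t + c1 ^ 2 * Γ1 ^ 2 / (t : ℝ) ^ 2) →
          (∀ t, m < t → t ≤ T →
            a (t + 1) ≤ (1 - 2 * lam * c2 / t) * a t + c2 ^ 2 * Γ2 ^ 2 / (t : ℝ) ^ 2) →
          a (T + 1) ≤
            (1 / T) * (4 * Γ1 ^ 2 * β ^ (2 * lam * c2 - 1) * c1 ^ 2 / (2 * lam * c1 - 1) +
                4 * Γ2 ^ 2 * (1 - β ^ (2 * lam * c2 - 1)) * c2 ^ 2 / (2 * lam * c2 - 1)) +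
              C / (T : ℝ) ^ (min (2 : ℝ) (2 * lam * c1)) :=
  statement_12_general lam c1 c2 Γ1 Γ2 B hlam hc2 hB h1 h2 β hβ
end

section
/- Let λ, c₁, c₂, Γ₁, Γ₂, B > 0 with 2λc₁ > 1 and 2λc₂ = 1, let β₁ ∈ (0,1), and set i₀ = ⌈2λc₁⌉. Then there exist constants C > 0 and T₀ ∈ ℕ such that for every integer T ≥ T₀ with β₁T ∈ ℕ and every sequence of nonnegative reals (a_t)_{t=i₀}^{T+1} with a_{i₀} ≤ 4B², a_{t+1} ≤ (1 − 2λc₁/t) a_t + c₁²Γ₁²/t² for i₀ ≤ t ≤ β₁T, and a_{t+1} ≤ (1 − 2λc₂/t) a_t + c₂²Γ₂²/t² for β₁T < t ≤ T, one has a_{T+1} ≤ (1/T)·[ 4Γ₁² β₁^{2λc₂−1} c₁²/(2λc₁ − 1) + 4Γ₂² c₂² · log(1/β₁) ] + C / T^{min(2, 2λc₁)}. -/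
/-!
While `2λc₁ = K > 1`, induction gives `a_t ≤ ν/t + D/t^γ` with `γ = min 2 K`: the `ν/t` term
absorbs the noise as soon as `ν(K - 1) ≥ c₁²Γ₁²`, and Bernoulli's inequality
`(t/(t+1))^γ ≥ 1 - γ/(t+1) ≥ 1 - K/t` carries the `D/t^γ` term, `D` being fixed by the
initial value. Once `2λc₂ = 1` the recursion reads `t a_{t+1} ≤ (t-1) a_t + F/t`, and since
`1/t ≤ log t - log (t-1)` the quantity `t a_{t+1} - F log t` is nonincreasing. Telescoping it
from `m = βT` to `T` and inserting the first-phase bound at `m + 1` gives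
`T a_{T+1} ≤ ν + F log(1/β) + D β^{1-γ} T^{1-γ}`.
-/

open Real

section PhaseOne

variable {K γ ν E D s : ℝ}

theorem one_sub_div_le_div_rpow (hγ : 1 ≤ γ) (hγK : γ ≤ K) (hKs : K ≤ s) :
    1 - K / s ≤ (s / (s + 1)) ^ γ := by
  have hs : 0 < s := by linarith
  have hbern := one_add_mul_self_le_rpow_one_add (s := -(1 / (s + 1)))
    (by rw [neg_le_neg_iff, div_le_one (by linarith)]; linarith) hγ
  have hγK' : γ / (s + 1) ≤ K / s := div_le_div₀ (by linarith) hγK hs (by linarith)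
  calc 1 - K / s ≤ 1 + γ * -(1 / (s + 1)) := by rw [mul_neg, mul_one_div]; linarith
    _ ≤ (1 + -(1 / (s + 1))) ^ γ := hbern
    _ = (s / (s + 1)) ^ γ := by congr 1; field_simp; ring

theorem one_sub_div_mul_div_add_le (hK : 1 ≤ K) (hKs : K ≤ s) (hν : 0 ≤ ν)
    (hE : E ≤ ν * (K - 1)) :
    (1 - K / s) * (ν / s) + E / s ^ 2 ≤ ν / (s + 1) := by
  have hs : 0 < s := by linarith
  rw [show (1 - K / s) * (ν / s) + E / s ^ 2 = (s * ν - K * ν + E) / s ^ 2 by field_simp,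
    div_le_div_iff₀ (by positivity) (by positivity)]
  nlinarith [mul_le_mul_of_nonneg_left hE hs.le]

theorem le_div_add_div_rpow_of_recurrence_step (hγ : 1 ≤ γ) (hγK : γ ≤ K) (hKs : K ≤ s) (hν : 0 ≤ ν)
    (hE : E ≤ ν * (K - 1)) (hD : 0 ≤ D) {x y : ℝ} (hx : x ≤ ν / s + D / s ^ γ)
    (hy : y ≤ (1 - K / s) * x + E / s ^ 2) :
    y ≤ ν / (s + 1) + D / (s + 1) ^ γ := by
  have hs : 0 < s := by linarith
  have hD' : (1 - K / s) * (D / s ^ γ) ≤ D / (s + 1) ^ γ :=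
    calc (1 - K / s) * (D / s ^ γ) ≤ (s / (s + 1)) ^ γ * (D / s ^ γ) := by
          gcongr; exact one_sub_div_le_div_rpow hγ hγK hKs
      _ = D / (s + 1) ^ γ := by
          rw [div_rpow hs.le (by linarith)]
          field_simp [(rpow_pos_of_pos hs γ).ne']
  have hKs' : 0 ≤ 1 - K / s := by rw [sub_nonneg, div_le_one hs]; exact hKs
  calc y ≤ (1 - K / s) * (ν / s + D / s ^ γ) + E / s ^ 2 := hy.trans (by gcongr)
    _ = ((1 - K / s) * (ν / s) + E / s ^ 2) + (1 - K / s) * (D / s ^ γ) := by ring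
    _ ≤ ν / (s + 1) + D / (s + 1) ^ γ :=
        add_le_add (one_sub_div_mul_div_add_le (by linarith) hKs hν hE) hD'

theorem le_div_add_div_rpow_of_recurrence {a : ℕ → ℝ} {t₀ n : ℕ}
    (hγ : 1 ≤ γ) (hγK : γ ≤ K) (hKt₀ : K ≤ t₀) (hν : 0 ≤ ν)
    (hE : E ≤ ν * (K - 1)) (hD : 0 ≤ D) (h₀ : a t₀ ≤ ν / t₀ + D / (t₀ : ℝ) ^ γ)
    (hrec : ∀ t, t₀ ≤ t → t < n → a (t + 1) ≤ (1 - K / t) * a t + E / (t : ℝ) ^ 2) :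
    ∀ t, t₀ ≤ t → t ≤ n → a t ≤ ν / t + D / (t : ℝ) ^ γ := by
  intro t ht
  induction t, ht using Nat.le_induction with
  | base => exact fun _ => h₀
  | succ t ht ih =>
    intro htn
    push_cast
    exact le_div_add_div_rpow_of_recurrence_step hγ hγK (hKt₀.trans (by exact_mod_cast ht))
      hν hE hD (ih (by omega)) (hrec t ht htn)

end PhaseOne

theorem inv_succ_le_log_succ_sub_log {s : ℝ} (hs : 0 < s) :
    1 / (s + 1) ≤ log (s + 1) - log s := by
  have h := one_sub_inv_le_log_of_pos (x := (s + 1) / s) (by positivity)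
  rwa [log_div (by linarith) hs.ne', inv_div, one_sub_div (by linarith), add_sub_cancel_left]
    at h

theorem succ_mul_le_of_recurrence_step {F s x y : ℝ} (hs : 0 < s) (hF : 0 ≤ F)
    (hy : y ≤ (1 - 1 / (s + 1)) * x + F / (s + 1) ^ 2) :
    (s + 1) * y ≤ s * x + F * (log (s + 1) - log s) := by
  have hlog := mul_le_mul_of_nonneg_left (inv_succ_le_log_succ_sub_log hs) hF
  calc (s + 1) * y ≤ (s + 1) * ((1 - 1 / (s + 1)) * x + F / (s + 1) ^ 2) := by gcongr
    _ = s * x + F * (1 / (s + 1)) := by field_simp; ring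
    _ ≤ s * x + F * (log (s + 1) - log s) := by linarith

theorem mul_le_add_log_of_recurrence {F : ℝ} {a : ℕ → ℝ} {m n : ℕ}
    (hm : 0 < m) (hF : 0 ≤ F)
    (hrec : ∀ t, m < t → t ≤ n → a (t + 1) ≤ (1 - 1 / t) * a t + F / (t : ℝ) ^ 2) :
    ∀ t, m ≤ t → t ≤ n → t * a (t + 1) ≤ m * a (m + 1) + F * (log t - log m) := by
  intro t ht
  induction t, ht using Nat.le_induction with
  | base => simp
  | succ t ht ih =>
    intro htn
    have hstep := succ_mul_le_of_recurrence_step (s := t) (Nat.cast_pos.mpr (hm.trans_le ht))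
      hF (by exact_mod_cast hrec (t + 1) (by omega) htn)
    push_cast
    linarith [ih (by omega)]

theorem mul_le_add_mul_rpow_of_le {ν D γ s x : ℝ} (hs : 0 < s) (hν : 0 ≤ ν) (hD : 0 ≤ D)
    (hγ : 0 ≤ γ) (hx : x ≤ ν / (s + 1) + D / (s + 1) ^ γ) :
    s * x ≤ ν + D * s ^ (1 - γ) := by
  have hν' : s * (ν / (s + 1)) ≤ ν := by
    rw [mul_div_assoc', div_le_iff₀ (by linarith)]; nlinarith
  have hD' : s * (D / (s + 1) ^ γ) ≤ D * s ^ (1 - γ) := by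
    rw [rpow_sub hs, rpow_one, mul_div_assoc', mul_div_assoc', mul_comm s D]
    gcongr
    linarith
  calc s * x ≤ s * (ν / (s + 1) + D / (s + 1) ^ γ) := by gcongr
    _ ≤ ν + D * s ^ (1 - γ) := by rw [mul_add]; exact add_le_add hν' hD'

theorem le_div_add_div_rpow_of_mul_le {ν D F γ β T x y : ℝ} (hβ : 0 < β) (hT : 0 < T)
    (hν : 0 ≤ ν) (hD : 0 ≤ D) (hγ : 0 ≤ γ)
    (hx : x ≤ ν / (β * T + 1) + D / (β * T + 1) ^ γ)
    (hy : T * y ≤ β * T * x + F * (log T - log (β * T))) :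
    y ≤ (ν + F * log (1 / β)) / T + D * β ^ (1 - γ) / T ^ γ := by
  have hx' := mul_le_add_mul_rpow_of_le (by positivity) hν hD hγ hx
  have hlog : log T - log (β * T) = log (1 / β) := by
    rw [log_mul hβ.ne' hT.ne', one_div, log_inv]; ring
  have hpow : (β * T) ^ (1 - γ) = β ^ (1 - γ) * T / T ^ γ := by
    rw [mul_rpow hβ.le hT.le, rpow_sub hT, rpow_one]; ring
  rw [hlog] at hy
  rw [hpow] at hx'
  calc y = T * y / T := by field_simp
    _ ≤ (ν + D * (β ^ (1 - γ) * T / T ^ γ) + F * log (1 / β)) / T := by gcongr; linarith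
    _ = (ν + F * log (1 / β)) / T + D * β ^ (1 - γ) / T ^ γ := by field_simp; ring

theorem le_and_lt_of_cast_eq_mul {β : ℝ} (hβ : β ∈ Set.Ioo (0 : ℝ) 1) {n T m : ℕ}
    (hn : 0 < n) (hT : ⌈n / β⌉₊ ≤ T) (hm : (m : ℝ) = β * T) : n ≤ m ∧ m < T := by
  obtain ⟨hβ0, hβ1⟩ := hβ
  have hnT : n / β ≤ (T : ℝ) := (Nat.le_ceil _).trans (by exact_mod_cast hT)
  have hT0 : (0 : ℝ) < T := lt_of_lt_of_le (by positivity) hnT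
  rw [div_le_iff₀ hβ0] at hnT
  constructor
  · exact_mod_cast (show (n : ℝ) ≤ m by rw [hm]; linarith)
  · exact_mod_cast (show (m : ℝ) < T by rw [hm]; nlinarith)

theorem statement_13_general (lam c1 c2 Γ1 Γ2 B : ℝ)
    (hB : 0 < B)
    (h1 : 1 < 2 * lam * c1) (h2 : 2 * lam * c2 = 1)
    (β : ℝ) (hβ : β ∈ Set.Ioo (0 : ℝ) 1) :
    ∃ C : ℝ, 0 < C ∧ ∃ T0 : ℕ, ∀ T : ℕ, T0 ≤ T →
      ∀ m : ℕ, (m : ℝ) = β * T →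
        ∀ a : ℕ → ℝ,
          (∀ t, ⌈2 * lam * c1⌉₊ ≤ t → t ≤ T + 1 → 0 ≤ a t) →
          a ⌈2 * lam * c1⌉₊ ≤ 4 * B ^ 2 →
          (∀ t, ⌈2 * lam * c1⌉₊ ≤ t → t ≤ m →
            a (t + 1) ≤ (1 - 2 * lam * c1 / t) * a t + c1 ^ 2 * Γ1 ^ 2 / (t : ℝ) ^ 2) →
          (∀ t, m < t → t ≤ T →
            a (t + 1) ≤ (1 - 2 * lam * c2 / t) * a t + c2 ^ 2 * Γ2 ^ 2 / (t : ℝ) ^ 2) →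
          a (T + 1) ≤
            (1 / T) * (4 * Γ1 ^ 2 * β ^ (2 * lam * c2 - 1) * c1 ^ 2 / (2 * lam * c1 - 1) +
                4 * Γ2 ^ 2 * c2 ^ 2 * Real.log (1 / β)) +
              C / (T : ℝ) ^ (min (2 : ℝ) (2 * lam * c1)) := by
  set K := 2 * lam * c1
  set γ := min (2 : ℝ) K
  have hγ : 1 ≤ γ := le_min one_le_two h1.le
  set i₀ := ⌈K⌉₊
  have hi₀ : K ≤ i₀ := Nat.le_ceil K
  have hi₀pos : (0 : ℝ) < i₀ := by linarith
  set ν := 4 * Γ1 ^ 2 * c1 ^ 2 / (K - 1)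
  have hν : 0 ≤ ν := div_nonneg (by positivity) (by linarith)
  have hE : c1 ^ 2 * Γ1 ^ 2 ≤ ν * (K - 1) := by
    rw [div_mul_cancel₀ _ (by linarith)]; nlinarith [sq_nonneg (c1 * Γ1)]
  set D := 4 * B ^ 2 * (i₀ : ℝ) ^ γ
  have hD : 0 < D := mul_pos (by positivity) (rpow_pos_of_pos hi₀pos γ)
  refine ⟨D * β ^ (1 - γ), mul_pos hD (rpow_pos_of_pos hβ.1 _), ⌈i₀ / β⌉₊,
    fun T hT m hm a _ ha₀ h3 h4 => ?_⟩
  obtain ⟨hi₀m, hmT⟩ := le_and_lt_of_cast_eq_mul hβ (Nat.cast_pos.mp hi₀pos) hT hm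
  have hm0 : 0 < m := (Nat.cast_pos.mp hi₀pos).trans_le hi₀m
  have h₀ : a i₀ ≤ ν / i₀ + D / (i₀ : ℝ) ^ γ := by
    rw [mul_div_assoc, div_self (rpow_pos_of_pos hi₀pos γ).ne', mul_one]
    linarith [div_nonneg hν hi₀pos.le]
  have hphase1 := le_div_add_div_rpow_of_recurrence hγ (min_le_right _ _) hi₀ hν hE hD.le h₀
    (fun t ht ht' => h3 t ht (Nat.lt_succ_iff.mp ht')) (m + 1) (by omega) le_rfl
  have hphase2 := mul_le_add_log_of_recurrence (F := c2 ^ 2 * Γ2 ^ 2) hm0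
    (by positivity) (by simpa only [h2] using h4) T hmT.le le_rfl
  push_cast [hm] at hphase1 hphase2
  have hlog : 0 ≤ log (1 / β) := log_nonneg (one_le_one_div hβ.1 hβ.2.le)
  rw [h2, sub_self, rpow_zero, mul_one, one_div_mul_eq_div]
  calc a (T + 1) ≤ (ν + c2 ^ 2 * Γ2 ^ 2 * log (1 / β)) / T + D * β ^ (1 - γ) / T ^ γ :=
        le_div_add_div_rpow_of_mul_le hβ.1 (Nat.cast_pos.mpr (hm0.trans hmT)) hν hD.le
          (by linarith) hphase1 hphase2
    _ ≤ _ := by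
        gcongr ?_ / _ + _
        nlinarith [mul_nonneg (mul_nonneg (sq_nonneg c2) (sq_nonneg Γ2)) hlog]

/-- Regret bound for two-phase SGD with heterogeneous noise, boundary case
`2λc₂ = 1`: any nonnegative sequence satisfying the error recursions with
learning rates `c₁/t` (noise `Γ₁`) on the first `β₁T` steps and `c₂/t` (noise
`Γ₂`) on the remaining steps, started from `a_{i₀} ≤ 4B²`, satisfies
`a_{T+1} ≤ (1/T)[4Γ₁²β₁^{2λc₂-1}c₁²/(2λc₁-1) + 4Γ₂²c₂² log(1/β₁)]
            + C/T^{min(2,2λc₁)}`. -/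
theorem statement_13 (lam c1 c2 Γ1 Γ2 B : ℝ)
    (hlam : 0 < lam) (hc1 : 0 < c1) (hc2 : 0 < c2)
    (hΓ1 : 0 < Γ1) (hΓ2 : 0 < Γ2) (hB : 0 < B)
    (h1 : 1 < 2 * lam * c1) (h2 : 2 * lam * c2 = 1)
    (β : ℝ) (hβ : β ∈ Set.Ioo (0 : ℝ) 1) :
    ∃ C : ℝ, 0 < C ∧ ∃ T0 : ℕ, ∀ T : ℕ, T0 ≤ T →
      ∀ m : ℕ, (m : ℝ) = β * T →
        ∀ a : ℕ → ℝ,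
          (∀ t, ⌈2 * lam * c1⌉₊ ≤ t → t ≤ T + 1 → 0 ≤ a t) →
          a ⌈2 * lam * c1⌉₊ ≤ 4 * B ^ 2 →
          (∀ t, ⌈2 * lam * c1⌉₊ ≤ t → t ≤ m →
            a (t + 1) ≤ (1 - 2 * lam * c1 / t) * a t + c1 ^ 2 * Γ1 ^ 2 / (t : ℝ) ^ 2) →
          (∀ t, m < t → t ≤ T →
            a (t + 1) ≤ (1 - 2 * lam * c2 / t) * a t + c2 ^ 2 * Γ2 ^ 2 / (t : ℝ) ^ 2) →
          a (T + 1) ≤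
            (1 / T) * (4 * Γ1 ^ 2 * β ^ (2 * lam * c2 - 1) * c1 ^ 2 / (2 * lam * c1 - 1) +
                4 * Γ2 ^ 2 * c2 ^ 2 * Real.log (1 / β)) +
              C / (T : ℝ) ^ (min (2 : ℝ) (2 * lam * c1)) :=
  statement_13_general lam c1 c2 Γ1 Γ2 B hB h1 h2 β hβ
end

section
/- For every β ∈ (0,1) there exists R₀ > 0 such that for all λ > 0 and all Γ_C, Γ_N > 0 with Γ_N/Γ_C ≥ R₀ the following holds. Define F(c₂) = 4Γ_N² β^{2λc₂−1}/λ² + 4Γ_C² (1 − β^{2λc₂−1}) c₂²/(2λc₂ − 1) for c₂ with 2λc₂ ≥ 2. Then every minimizer c₂* of F over {c₂ : 2λc₂ ≥ 2} satisfies 2λc₂* ∈ [ 1 + (2·log(Γ_N/Γ_C) + log log(1/β)) / log(1/β) , 1 + (2·log(4Γ_N/Γ_C) + log log(1/β)) / log(1/β) ]. -/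
/-!
Put `L = log (1/β)`, `R = Γ_N/Γ_C` and `x = 2λc₂ - 1 ≥ 1`; then `λ² F / Γ_C²` is
`G(x) = 4R² e^{-Lx} + (1 - e^{-Lx}) (x+1)²/x`. The noise term has slope `-4R²L e^{-Lx}`, the clean
term has slope `L e^{-Lx} (x+1)²/x + (1 - e^{-Lx})(1 - 1/x²)`, which lies in `[0, 4/e + 1]` for
`x ≥ 1` (as `Lx e^{-Lx} ≤ 1/e`) and is at least `7/9` once `x ≥ 3` and `e^{-Lx} ≤ 1/8`.
The lower end `a` of the interval solves `R²L e^{-La} = 1`, so `G' ≤ -4 + 4/e + 1 < 0` on `(1, a)`;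
the upper end `b` solves `16R²L e^{-Lb} = 1`, so `G' ≥ -1/4 + 7/9 > 0` on `(b, ∞)`. Hence every
minimizer of `G` on `[1, ∞)` lies in `[a, b]`, provided `16R²L ≥ 8 + e^{3L}`, which makes `b ≥ 3`
and `e^{-Lx} ≤ 1/8` beyond `b`.
-/

open Real Set

theorem IsMinOn.le_of_hasDerivAt_neg {f f' : ℝ → ℝ} {p q x₀ : ℝ} (hmin : IsMinOn f (Ici p) x₀)
    (hx₀ : p ≤ x₀) (hf : ∀ x ∈ Icc p q, HasDerivAt f (f' x) x)
    (hf' : ∀ x ∈ Ioo p q, f' x < 0) : q ≤ x₀ := by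
  by_contra! h
  have hanti : StrictAntiOn f (Icc x₀ q) := by
    refine strictAntiOn_of_hasDerivWithinAt_neg (f' := f') (convex_Icc _ _)
      (fun x hx ↦ (hf x ⟨hx₀.trans hx.1, hx.2⟩).continuousAt.continuousWithinAt)
      (fun x hx ↦ ?_) (fun x hx ↦ ?_) <;> rw [interior_Icc] at hx
    · exact (hf x ⟨hx₀.trans hx.1.le, hx.2.le⟩).hasDerivWithinAt
    · exact hf' x ⟨hx₀.trans_lt hx.1, hx.2⟩
  exact (hanti ⟨le_rfl, h.le⟩ ⟨h.le, le_rfl⟩ h).not_ge (hmin (hx₀.trans h.le))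

theorem IsMinOn.le_of_hasDerivAt_pos {f f' : ℝ → ℝ} {p q x₀ : ℝ} (hmin : IsMinOn f (Ici p) x₀)
    (hq : p ≤ q) (hf : ∀ x ∈ Ici q, HasDerivAt f (f' x) x)
    (hf' : ∀ x ∈ Ioi q, 0 < f' x) : x₀ ≤ q := by
  by_contra! h
  have hmono : StrictMonoOn f (Icc q x₀) := by
    refine strictMonoOn_of_hasDerivWithinAt_pos (f' := f') (convex_Icc _ _)
      (fun x hx ↦ (hf x hx.1).continuousAt.continuousWithinAt)
      (fun x hx ↦ ?_) (fun x hx ↦ ?_) <;> rw [interior_Icc] at hx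
    · exact (hf x hx.1.le).hasDerivWithinAt
    · exact hf' x hx.1
  exact (hmono ⟨le_rfl, h.le⟩ ⟨h.le, le_rfl⟩ h).not_ge (hmin hq)

theorem one_le_mul_exp_neg_iff {K y : ℝ} (hK : 0 < K) : 1 ≤ K * exp (-y) ↔ y ≤ log K := by
  rw [← exp_log hK, ← exp_add, one_le_exp_iff, exp_log hK, ← sub_eq_add_neg, sub_nonneg]

theorem mul_exp_neg_le_one_iff {K y : ℝ} (hK : 0 < K) : K * exp (-y) ≤ 1 ↔ log K ≤ y := by
  rw [← exp_log hK, ← exp_add, exp_le_one_iff, exp_log hK, ← sub_eq_add_neg, sub_nonpos]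

noncomputable def noisyFirstRegret (β lam ΓC ΓN c : ℝ) : ℝ :=
  4 * ΓN ^ 2 * β ^ (2 * lam * c - 1) / lam ^ 2 +
    4 * ΓC ^ 2 * (1 - β ^ (2 * lam * c - 1)) * c ^ 2 / (2 * lam * c - 1)

noncomputable def normalizedRegret (R L x : ℝ) : ℝ :=
  4 * R ^ 2 * exp (-(L * x)) + (1 - exp (-(L * x))) * (x + 1) ^ 2 / x

noncomputable def normalizedRegretDeriv (R L x : ℝ) : ℝ :=
  -(4 * R ^ 2 * L * exp (-(L * x))) + L * exp (-(L * x)) * (x + 1) ^ 2 / x +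
    (1 - exp (-(L * x))) * (1 - 1 / x ^ 2)

theorem noisyFirstRegret_eq {β lam ΓC ΓN : ℝ} (hβ : 0 < β) (hlam : lam ≠ 0) (hΓC : ΓC ≠ 0)
    (c : ℝ) : noisyFirstRegret β lam ΓC ΓN c =
      ΓC ^ 2 / lam ^ 2 * normalizedRegret (ΓN / ΓC) (log (1 / β)) (2 * lam * c - 1) := by
  have hpow : β ^ (2 * lam * c - 1) = exp (-(log (1 / β) * (2 * lam * c - 1))) := by
    rw [rpow_def_of_pos hβ, one_div, log_inv, neg_mul, neg_neg]
  rw [noisyFirstRegret, normalizedRegret, hpow]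
  field_simp
  ring

theorem isMinOn_normalizedRegret {β lam ΓC ΓN c₀ : ℝ} (hβ : 0 < β) (hlam : 0 < lam)
    (hΓC : 0 < ΓC) (hmin : IsMinOn (noisyFirstRegret β lam ΓC ΓN) {c | 2 ≤ 2 * lam * c} c₀) :
    IsMinOn (normalizedRegret (ΓN / ΓC) (log (1 / β))) (Ici 1) (2 * lam * c₀ - 1) := by
  intro x hx
  have hc : 2 * lam * ((x + 1) / (2 * lam)) - 1 = x := by field_simp; ring
  have h := hmin (show 2 ≤ 2 * lam * ((x + 1) / (2 * lam)) by simp only [mem_Ici] at hx; linarith)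
  simp only [mem_ofPred_eq, noisyFirstRegret_eq hβ hlam.ne' hΓC.ne', hc] at h
  exact le_of_mul_le_mul_left h (by positivity)

theorem hasDerivAt_normalizedRegret (R L : ℝ) {x : ℝ} (hx : x ≠ 0) :
    HasDerivAt (normalizedRegret R L) (normalizedRegretDeriv R L x) x := by
  have hexp : HasDerivAt (fun y ↦ exp (-(L * y))) (-L * exp (-(L * x))) x := by
    simpa [mul_comm] using ((hasDerivAt_id x).const_mul L).neg.exp
  have hsq : HasDerivAt (fun y ↦ (y + 1) ^ 2) (2 * (x + 1)) x := by
    simpa using! ((hasDerivAt_id x).add_const 1).pow 2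
  have h := (hexp.const_mul (4 * R ^ 2)).add
    ((((hasDerivAt_const x 1).sub hexp).mul hsq).div (hasDerivAt_id x) hx)
  refine h.congr_deriv ?_
  simp only [normalizedRegretDeriv, Pi.sub_apply, Pi.mul_apply, id]
  field_simp
  ring

theorem normalizedRegretDeriv_neg {R L x : ℝ} (hL : 0 < L) (hx : 1 ≤ x)
    (h : 1 ≤ R ^ 2 * L * exp (-(L * x))) : normalizedRegretDeriv R L x < 0 := by
  have hx0 : 0 < x := by linarith
  have he : exp (-(L * x)) ≤ 1 := exp_le_one_iff.mpr (by nlinarith)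
  have hsq : (x + 1) ^ 2 / x ≤ 4 * x := by rw [div_le_iff₀ hx0]; nlinarith
  have hmid : L * exp (-(L * x)) * (x + 1) ^ 2 / x ≤ 4 * exp (-1) := calc
    L * exp (-(L * x)) * (x + 1) ^ 2 / x = L * exp (-(L * x)) * ((x + 1) ^ 2 / x) := by ring
    _ ≤ L * exp (-(L * x)) * (4 * x) := by gcongr
    _ = 4 * ((L * x) * exp (-(L * x))) := by ring
    _ ≤ 4 * exp (-1) := by gcongr; exact mul_exp_neg_le_exp_neg_one _
  have hlast : (1 - exp (-(L * x))) * (1 - 1 / x ^ 2) ≤ 1 := by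
    have : 0 < 1 / x ^ 2 := by positivity
    nlinarith [exp_pos (-(L * x))]
  have he1 : 4 * exp (-1) < 3 := by
    have := exp_one_gt_d9
    rw [exp_neg, ← div_eq_mul_inv, div_lt_iff₀ (exp_pos 1)]
    linarith
  rw [normalizedRegretDeriv]
  linarith

theorem normalizedRegretDeriv_pos {R L x : ℝ} (hL : 0 < L) (hx : 3 ≤ x)
    (hK : 8 ≤ 16 * R ^ 2 * L) (h : 16 * R ^ 2 * L * exp (-(L * x)) ≤ 1) :
    0 < normalizedRegretDeriv R L x := by
  have he : exp (-(L * x)) ≤ 1 / 8 := by nlinarith [exp_pos (-(L * x))]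
  have hmid : 0 ≤ L * exp (-(L * x)) * (x + 1) ^ 2 / x := by positivity
  have hx2 : 1 / x ^ 2 ≤ 1 / 9 := by
    rw [div_le_div_iff₀ (by positivity) (by norm_num)]; nlinarith
  have hlast : 7 / 9 ≤ (1 - exp (-(L * x))) * (1 - 1 / x ^ 2) := by
    nlinarith [exp_pos (-(L * x))]
  rw [normalizedRegretDeriv]
  linarith

theorem mem_Icc_of_isMinOn_normalizedRegret {R L x₀ : ℝ} (hR : 0 < R) (hL : 0 < L)
    (hK : 8 + exp (3 * L) ≤ 16 * R ^ 2 * L) (hmin : IsMinOn (normalizedRegret R L) (Ici 1) x₀)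
    (hx₀ : 1 ≤ x₀) : x₀ ∈ Icc (log (R ^ 2 * L) / L) (log (16 * R ^ 2 * L) / L) := by
  have hderiv (x : ℝ) (hx : 1 ≤ x) :
      HasDerivAt (normalizedRegret R L) (normalizedRegretDeriv R L x) x :=
    hasDerivAt_normalizedRegret R L (by positivity)
  constructor
  · refine hmin.le_of_hasDerivAt_neg hx₀ (fun x hx ↦ hderiv x hx.1) fun x hx ↦
      normalizedRegretDeriv_neg hL hx.1.le <| (one_le_mul_exp_neg_iff (by positivity)).mpr ?_
    have := (lt_div_iff₀ hL).mp hx.2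
    linarith
  · have h3 : 3 ≤ log (16 * R ^ 2 * L) / L := by
      rw [le_div_iff₀ hL]
      exact (le_log_iff_exp_le (by positivity)).mpr (by linarith [exp_pos 8])
    refine hmin.le_of_hasDerivAt_pos (by linarith) (fun x hx ↦ hderiv x (by linarith [mem_Ici.mp hx]))
      fun x hx ↦ normalizedRegretDeriv_pos hL (h3.trans hx.le) (by linarith [exp_pos (3 * L)]) <|
        (mul_exp_neg_le_one_iff (by positivity)).mpr ?_
    have := (div_lt_iff₀ hL).mp hx
    linarith

/-- Location of the optimal second learning rate for the noisy-first order
(Lemma on large noise ratio): for a sufficiently large ratio `Γ_N/Γ_C`, every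
minimizer `c₂*` of
`F(c₂) = 4Γ_N²β^{2λc₂−1}/λ² + 4Γ_C²(1−β^{2λc₂−1})c₂²/(2λc₂−1)`
over `{c₂ : 2λc₂ ≥ 2}` satisfies
`2λc₂* ∈ [1 + (2 log(Γ_N/Γ_C) + log log(1/β))/log(1/β),
          1 + (2 log(4Γ_N/Γ_C) + log log(1/β))/log(1/β)]`. -/
theorem statement_15 (β : ℝ) (hβ : β ∈ Set.Ioo (0 : ℝ) 1) :
    ∃ R0 : ℝ, 0 < R0 ∧
      ∀ lam ΓC ΓN : ℝ, 0 < lam → 0 < ΓC → 0 < ΓN → R0 ≤ ΓN / ΓC →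
        ∀ c2 : ℝ, 2 ≤ 2 * lam * c2 →
          (∀ c : ℝ, 2 ≤ 2 * lam * c →
            4 * ΓN ^ 2 * β ^ (2 * lam * c2 - 1) / lam ^ 2 +
                4 * ΓC ^ 2 * (1 - β ^ (2 * lam * c2 - 1)) * c2 ^ 2 / (2 * lam * c2 - 1) ≤
              4 * ΓN ^ 2 * β ^ (2 * lam * c - 1) / lam ^ 2 +
                4 * ΓC ^ 2 * (1 - β ^ (2 * lam * c - 1)) * c ^ 2 / (2 * lam * c - 1)) →
          (1 + (2 * Real.log (ΓN / ΓC) + Real.log (Real.log (1 / β))) / Real.log (1 / β)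
              ≤ 2 * lam * c2 ∧
           2 * lam * c2 ≤
            1 + (2 * Real.log (4 * ΓN / ΓC) + Real.log (Real.log (1 / β))) / Real.log (1 / β)) := by
  obtain ⟨hβ0, hβ1⟩ := hβ
  set L := log (1 / β)
  have hL : 0 < L := log_pos (one_lt_one_div hβ0 hβ1)
  refine ⟨√((8 + exp (3 * L)) / (16 * L)), by positivity, ?_⟩
  intro lam ΓC ΓN hlam hΓC hΓN hR c2 hc2 hmin
  have hG := isMinOn_normalizedRegret hβ0 hlam hΓC (c₀ := c2) hmin
  set R := ΓN / ΓC with hR_def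
  have hRpos : 0 < R := div_pos hΓN hΓC
  have hK : 8 + exp (3 * L) ≤ 16 * R ^ 2 * L := by
    have := (sqrt_le_left hRpos.le).mp hR
    rw [div_le_iff₀ (by positivity)] at this
    linarith
  have hlog_a : 2 * log R + log L = log (R ^ 2 * L) := by
    rw [log_mul (by positivity) hL.ne', log_pow]; push_cast; ring
  have hlog_b : 2 * log (4 * ΓN / ΓC) + log L = log (16 * R ^ 2 * L) := by
    rw [mul_div_assoc, ← hR_def, show 16 * R ^ 2 * L = (4 * R) ^ 2 * L by ring,
      log_mul (by positivity) hL.ne', log_pow]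
    push_cast; ring
  obtain ⟨ha, hb⟩ := mem_Icc_of_isMinOn_normalizedRegret hRpos hL hK hG (by linarith)
  rw [hlog_a, hlog_b]
  constructor <;> linarith
end

section
/- For every β ∈ (0,1) there exists R₀ > 0 such that for all λ > 0 and all Γ_C, Γ_N > 0 with Γ_N/Γ_C ≥ R₀ the following holds. Set σ = (Γ_C/Γ_N)² and define G(c₂) = 4Γ_C² β^{2λc₂−1}/λ² + 4Γ_N² (1 − β^{2λc₂−1}) c₂²/(2λc₂ − 1) for c₂ with 0 < 2λc₂ < 1. Then every minimizer c₂* of G over {c₂ : 0 < 2λc₂ < 1} satisfies 2λc₂* ∈ [σ, 8σ/β]. -/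
set_option maxHeartbeats 1600000

private lemma exp_neg_le_quad17 {t : ℝ} (ht : 0 ≤ t) : Real.exp (-t) ≤ 1 - t + t ^ 2 := by
  have h1 := Real.add_one_le_exp t
  have h2 : Real.exp (-t) * Real.exp t = 1 := by
    rw [← Real.exp_add]; simp
  have h3 : 0 < Real.exp t := Real.exp_pos t
  have hq : 0 ≤ 1 - t + t ^ 2 := by nlinarith [sq_nonneg (2 * t - 1)]
  nlinarith [mul_nonneg hq (by linarith : (0:ℝ) ≤ Real.exp t - (t + 1)),
    mul_nonneg (mul_nonneg ht ht) ht]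

/-- Location of the optimal second learning rate for the clean-first order
(Lemma on large noise ratio): for a sufficiently large ratio `Γ_N/Γ_C`, with
`σ = (Γ_C/Γ_N)²`, every minimizer `c₂*` of
`G(c₂) = 4Γ_C²β^{2λc₂−1}/λ² + 4Γ_N²(1−β^{2λc₂−1})c₂²/(2λc₂−1)`
over `{c₂ : 0 < 2λc₂ < 1}` satisfies `2λc₂* ∈ [σ, 8σ/β]`. -/
theorem statement_17 (β : ℝ) (hβ : β ∈ Set.Ioo (0 : ℝ) 1) :
    ∃ R0 : ℝ, 0 < R0 ∧
      ∀ lam ΓC ΓN : ℝ, 0 < lam → 0 < ΓC → 0 < ΓN → R0 ≤ ΓN / ΓC →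
        ∀ c2 : ℝ, 0 < 2 * lam * c2 → 2 * lam * c2 < 1 →
          (∀ c : ℝ, 0 < 2 * lam * c → 2 * lam * c < 1 →
            4 * ΓC ^ 2 * β ^ (2 * lam * c2 - 1) / lam ^ 2 +
                4 * ΓN ^ 2 * (1 - β ^ (2 * lam * c2 - 1)) * c2 ^ 2 / (2 * lam * c2 - 1) ≤
              4 * ΓC ^ 2 * β ^ (2 * lam * c - 1) / lam ^ 2 +
                4 * ΓN ^ 2 * (1 - β ^ (2 * lam * c - 1)) * c ^ 2 / (2 * lam * c - 1)) →
          ((ΓC / ΓN) ^ 2 ≤ 2 * lam * c2 ∧ 2 * lam * c2 ≤ 8 * (ΓC / ΓN) ^ 2 / β) := by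
  obtain ⟨hβ0, hβ1⟩ := hβ
  set a : ℝ := -Real.log β with ha
  clear_value a
  have ha0 : 0 < a := by
    have := Real.log_neg hβ0 hβ1
    rw [ha]; linarith
  set E : ℝ := β⁻¹ with hEdef
  clear_value E
  have hE : Real.exp a = E := by
    rw [ha, Real.exp_neg, Real.exp_log hβ0, hEdef]
  have hEpos : 0 < E := by rw [hEdef]; exact inv_pos.mpr hβ0
  have hβE : β * E = 1 := by rw [hEdef]; exact mul_inv_cancel₀ (ne_of_gt hβ0)
  have hE1 : 1 < E := by nlinarith
  have hE1' : (0:ℝ) < E - 1 := by linarith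
  set k : ℝ := a * E / (E - 1) with hkdef
  clear_value k
  have hkE : (E - 1) * k = a * E := by
    rw [hkdef]; field_simp
  have hlt : E - 1 < a * E := by
    have h := Real.add_one_lt_exp (show (-a) ≠ 0 by intro h; rw [neg_eq_zero] at h; linarith)
    rw [Real.exp_neg, hE] at h
    have h2 := mul_lt_mul_of_pos_right h hEpos
    rw [inv_mul_cancel₀ (ne_of_gt hEpos)] at h2
    nlinarith [h2]
  have hk1 : 1 < k := by
    rw [hkdef, lt_div_iff₀ hE1']
    nlinarith
  have hk0 : 0 < k := lt_trans one_pos hk1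
  set σ₀ : ℝ := (k - 1) / (8 * (a + 1) * k ^ 2) with hσ₀def
  clear_value σ₀
  have hσ₀pos : 0 < σ₀ := by
    rw [hσ₀def]; exact div_pos (by linarith) (by nlinarith [mul_pos hk0 hk0])
  refine ⟨(Real.sqrt σ₀)⁻¹, inv_pos.mpr (Real.sqrt_pos.mpr hσ₀pos), ?_⟩
  intro lam ΓC ΓN hlam hΓC hΓN hR c2 hx2pos hx2lt hmin
  set σ : ℝ := (ΓC / ΓN) ^ 2 with hσdef
  clear_value σ
  have hσpos : 0 < σ := by rw [hσdef]; positivity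
  have hσle : σ ≤ σ₀ := by
    have h1 : 0 < Real.sqrt σ₀ := Real.sqrt_pos.mpr hσ₀pos
    have h2 : ΓC / ΓN ≤ Real.sqrt σ₀ := by
      have h5 := inv_anti₀ (inv_pos.mpr h1) hR
      rwa [inv_inv, inv_div] at h5
    calc σ = (ΓC / ΓN) ^ 2 := hσdef
      _ ≤ Real.sqrt σ₀ ^ 2 := by
          apply pow_le_pow_left₀ (by positivity) h2
      _ = σ₀ := Real.sq_sqrt hσ₀pos.le
  have hσσ : 8 * (a + 1) * k ^ 2 * σ ≤ k - 1 := by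
    rw [hσ₀def] at hσle
    have := (le_div_iff₀ (by nlinarith [mul_pos hk0 hk0] : (0:ℝ) < 8 * (a + 1) * k ^ 2)).mp hσle
    linarith
  have hkσ : k * σ ≤ 1 / 8 := by
    nlinarith [mul_pos (mul_pos hk0 hk0) hσpos,
      mul_pos ha0 (mul_pos (mul_pos hk0 hk0) hσpos), sub_pos.mpr hk1]
  have hσ8 : σ ≤ 1 / 8 := by linarith [mul_pos hσpos (sub_pos.mpr hk1), hkσ]
  set x2 : ℝ := 2 * lam * c2 with hx2def
  clear_value x2
  have hΓNne : ΓN ≠ 0 := ne_of_gt hΓN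
  have hlamne : lam ≠ 0 := ne_of_gt hlam
  have h2lam : (2 : ℝ) * lam ≠ 0 := mul_ne_zero two_ne_zero hlamne
  have hσΓ : σ * ΓN ^ 2 = ΓC ^ 2 := by
    rw [hσdef, div_pow]
    exact div_mul_cancel₀ _ (pow_ne_zero 2 hΓNne)
  have hfac : ∀ y cc : ℝ, 2 * lam * cc = y → y ≠ 1 →
      4 * ΓC ^ 2 * β ^ (y - 1) / lam ^ 2 + 4 * ΓN ^ 2 * (1 - β ^ (y - 1)) * cc ^ 2 / (y - 1)
        = ΓN ^ 2 / lam ^ 2 * (4 * σ * β ^ (y - 1) + (β ^ (y - 1) - 1) * y ^ 2 / (1 - y)) := by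
    intro y cc hy hy1
    have hcc : cc = y / (2 * lam) := by
      rw [eq_div_iff h2lam]; linarith [hy]
    subst hcc
    have h1 : y - 1 ≠ 0 := sub_ne_zero.mpr hy1
    have h2 : (1:ℝ) - y ≠ 0 := sub_ne_zero.mpr (Ne.symm hy1)
    rw [← hσΓ]
    field_simp
    ring
  have hH : ∀ x : ℝ, 0 < x → x < 1 →
      4 * σ * β ^ (x2 - 1) + (β ^ (x2 - 1) - 1) * x2 ^ 2 / (1 - x2)
        ≤ 4 * σ * β ^ (x - 1) + (β ^ (x - 1) - 1) * x ^ 2 / (1 - x) := by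
    intro x hx0 hx1
    have hxx : 2 * lam * (x / (2 * lam)) = x := by
      rw [mul_comm]; exact div_mul_cancel₀ x h2lam
    have hc := hmin (x / (2 * lam)) (by rw [hxx]; exact hx0) (by rw [hxx]; exact hx1)
    rw [hxx] at hc
    rw [hfac x2 c2 hx2def.symm (ne_of_lt hx2lt), hfac x (x / (2 * lam)) hxx (ne_of_lt hx1)] at hc
    exact le_of_mul_le_mul_left hc (div_pos (pow_pos hΓN 2) (pow_pos hlam 2))
  have hpow : ∀ x : ℝ, β ^ (x - 1) = E * Real.exp (-(a * x)) := by
    intro x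
    rw [Real.rpow_def_of_pos hβ0, ← hE, ← Real.exp_add]
    congr 1
    rw [ha]; ring
  constructor
  · -- σ ≤ x2
    by_contra hcon
    push_neg at hcon
    set x0 : ℝ := 2 * k * σ with hx0def
    clear_value x0
    have hx00 : 0 < x0 := by rw [hx0def]; exact mul_pos (mul_pos two_pos hk0) hσpos
    have hx0le : x0 ≤ 1 / 4 := by rw [hx0def]; linarith only [hkσ]
    have hHle := hH x0 hx00 (by linarith)
    rw [hpow x2, hpow x0] at hHle
    set u : ℝ := Real.exp (-(a * x2)) with hu
    set v : ℝ := Real.exp (-(a * x0)) with hv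
    clear_value u v
    have hu1 : 1 - a * x2 ≤ u := by
      rw [hu]; linarith only [Real.add_one_le_exp (-(a * x2))]
    have hv2 : v ≤ 1 - a * x0 + (a * x0) ^ 2 := by
      rw [hv]; exact exp_neg_le_quad17 (mul_nonneg ha0.le hx00.le)
    have hv1 : v ≤ 1 := by
      rw [hv]
      calc Real.exp (-(a * x0)) ≤ Real.exp 0 :=
          Real.exp_le_exp.mpr (neg_nonpos.mpr (mul_nonneg ha0.le hx00.le))
        _ = 1 := Real.exp_zero
    have hvpos : 0 < v := by rw [hv]; exact Real.exp_pos _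
    have hEu1 : 0 ≤ E * u - 1 := by
      have h : E * u = Real.exp (a * (1 - x2)) := by
        rw [hu, ← hE, ← Real.exp_add]; congr 1; ring
      rw [h]
      linarith only [Real.add_one_le_exp (a * (1 - x2)), mul_pos ha0 (sub_pos.mpr hx2lt)]
    have hA : 0 ≤ (E * u - 1) * x2 ^ 2 / (1 - x2) :=
      div_nonneg (mul_nonneg hEu1 (sq_nonneg x2)) (by linarith)
    have hB : (E * v - 1) * x0 ^ 2 / (1 - x0) ≤ (E - 1) * x0 ^ 2 * (1 + 2 * x0) := by
      rw [div_le_iff₀ (by linarith : (0:ℝ) < 1 - x0)]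
      have h₁ : 0 ≤ x0 ^ 2 * (E * (1 - v)) :=
        mul_nonneg (sq_nonneg x0) (mul_nonneg hEpos.le (by linarith))
      have h₂ : 0 ≤ x0 ^ 2 * ((E - 1) * (x0 * (1 - 2 * x0))) :=
        mul_nonneg (sq_nonneg x0)
          (mul_nonneg (by linarith) (mul_nonneg hx00.le (by linarith)))
      linarith only [h₁, h₂]
    have hmainA : (E - 1) * x0 ^ 2 * (1 + 2 * x0) = 4 * a * E * k * σ ^ 2 * (1 + 4 * k * σ) := by
      rw [hx0def]
      linear_combination (4 * k * σ ^ 2 * (1 + 4 * k * σ)) * hkE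
    have huv : a * (x0 - x2) - (a * x0) ^ 2 ≤ u - v := by linarith
    have h5 : a * (2 * k - 1) * σ - 4 * a ^ 2 * k ^ 2 * σ ^ 2
        < a * (x0 - x2) - (a * x0) ^ 2 := by
      rw [hx0def]
      linarith only [mul_lt_mul_of_pos_left hcon ha0, hx0def]
    have h6 : 0 < k - 1 - 4 * (a + 1) * k ^ 2 * σ := by
      linarith only [hσσ, mul_pos (mul_pos (show (0:ℝ) < a + 1 by linarith) (mul_pos hk0 hk0)) hσpos]
    have hstep : 4 * a * E * k * σ ^ 2 * (1 + 4 * k * σ) < 4 * σ * E * (u - v) := by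
      have hσE : (0:ℝ) < 4 * σ * E := mul_pos (mul_pos (by norm_num) hσpos) hEpos
      have h7 := mul_le_mul_of_nonneg_left huv hσE.le
      have h8 := mul_lt_mul_of_pos_left h5 hσE
      have h9 := mul_pos (show (0:ℝ) < 4 * a * E * σ ^ 2 from
        mul_pos (mul_pos (mul_pos (by norm_num) ha0) hEpos) (pow_pos hσpos 2)) h6
      linarith only [h7, h8, h9]
    linarith only [hHle, hA, hB, hmainA, hstep]
  · -- x2 ≤ 8σ/β
    rw [show (8:ℝ) * σ / β = 8 * σ * E by rw [hEdef, div_eq_mul_inv]]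
    by_contra hcon
    push_neg at hcon
    have hHle := hH (2 * σ) (by linarith) (by linarith)
    rw [hpow x2, hpow (2 * σ)] at hHle
    set u : ℝ := Real.exp (-(a * x2)) with hu
    set w : ℝ := Real.exp (-(a * (2 * σ))) with hw
    clear_value u w
    have hu1 : 1 - a * x2 ≤ u := by
      rw [hu]; linarith only [Real.add_one_le_exp (-(a * x2))]
    have hw1 : w ≤ 1 := by
      rw [hw]
      calc Real.exp (-(a * (2 * σ))) ≤ Real.exp 0 :=
          Real.exp_le_exp.mpr (neg_nonpos.mpr (mul_nonneg ha0.le (by linarith)))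
        _ = 1 := Real.exp_zero
    have hg2 : a * x2 ^ 2 ≤ (E * u - 1) * x2 ^ 2 / (1 - x2) := by
      rw [le_div_iff₀ (by linarith : (0:ℝ) < 1 - x2)]
      have hEu : E * u = Real.exp (a * (1 - x2)) := by
        rw [hu, ← hE, ← Real.exp_add]; congr 1; ring
      have h1 : a * (1 - x2) + 1 ≤ E * u := by
        rw [hEu]; linarith only [Real.add_one_le_exp (a * (1 - x2))]
      linarith only [mul_le_mul_of_nonneg_right (show a * (1 - x2) ≤ E * u - 1 by linarith)
        (sq_nonneg x2)]
    have hBw : (E * w - 1) * (2 * σ) ^ 2 / (1 - 2 * σ) ≤ 8 * (E - 1) * σ ^ 2 := by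
      rw [div_le_iff₀ (by linarith : (0:ℝ) < 1 - 2 * σ)]
      have h₁ : 0 ≤ σ ^ 2 * ((E - 1) * (1 - 4 * σ)) :=
        mul_nonneg (sq_nonneg σ) (mul_nonneg (by linarith) (by linarith))
      have h₂ : 0 ≤ σ ^ 2 * (E * (1 - w)) :=
        mul_nonneg (sq_nonneg σ) (mul_nonneg hEpos.le (by linarith))
      linarith only [h₁, h₂]
    have hσE : (0:ℝ) < 4 * σ * E := mul_pos (mul_pos (by norm_num) hσpos) hEpos
    have h₄ := mul_le_mul_of_nonneg_left hu1 hσE.le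
    have h₅ := mul_le_mul_of_nonneg_left hw1 hσE.le
    have h₆ := mul_le_mul_of_nonneg_left (le_of_lt hlt) (by positivity : (0:ℝ) ≤ 8 * σ ^ 2)
    have h₃ := mul_lt_mul_of_pos_left hcon (mul_pos ha0 hx2pos)
    have h₇ := mul_lt_mul_of_pos_left hcon
      (mul_pos (mul_pos (mul_pos (show (0:ℝ) < 4 by norm_num) ha0) hσpos) hEpos)
    have h₈ : 8 * a * E * σ ^ 2 < 32 * a * E ^ 2 * σ ^ 2 := by
      linarith only [mul_pos (mul_pos ha0 (mul_pos hEpos (pow_pos hσpos 2)))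
        (show (0:ℝ) < 4 * E - 1 by linarith), hE1]
    linarith only [hHle, hg2, hBw, h₃, h₄, h₅, h₆, h₇, h₈]
end

section
/- Let β ∈ (0,1) and Γ₁, Γ₂ > 0 with Γ₁ < Γ₂, and set ε₀ = Γ₁²/Γ₂² ∈ (0,1). Define Q(ε) = 4Γ₁² β^{ε−1} + Γ₂² (1 − β^{ε−1}) · ε²/(ε − 1) for ε ∈ (0,1). Then Q is differentiable at ε₀ and Q'(ε₀) ≤ −2Γ₁² β^{ε₀−1} log(1/β) < 0. -/
/-!
Write `p = β^(ε₀-1)` and `L = log β < 0`. At `ε₀` the identity `Γ₂² ε₀ = Γ₁²` turns the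
quotient-rule terms of `Q'` into multiples of `Γ₁²`, except for the factor `1 - p`. Bounding it
by `p - 1 ≤ p log p = p (ε₀ - 1) L` makes those terms collapse exactly to `-2 Γ₁² p L`, so
`Q'(ε₀) ≤ 4 Γ₁² p L - 2 Γ₁² p L = 2 Γ₁² p L < 0`.
-/

open Real

lemma hasDerivAt_regret_bound {a b β ε : ℝ} (hβ : 0 < β) (hε : ε ≠ 1) :
    HasDerivAt (fun ε : ℝ => a * β ^ (ε - 1) + b * (1 - β ^ (ε - 1)) * ε ^ 2 / (ε - 1))
      (a * β ^ (ε - 1) * log β - b * β ^ (ε - 1) * log β * ε ^ 2 / (ε - 1)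
        + b * (1 - β ^ (ε - 1)) * (ε * (ε - 2)) / (ε - 1) ^ 2) ε := by
  have hsub : ε - 1 ≠ 0 := sub_ne_zero.mpr hε
  have hshift : HasDerivAt (fun ε : ℝ => ε - 1) 1 ε := (hasDerivAt_id ε).sub_const 1
  have hpow : HasDerivAt (fun ε : ℝ => β ^ (ε - 1)) (log β * 1 * β ^ (ε - 1)) ε :=
    hshift.const_rpow hβ
  refine ((hpow.const_mul a).add
    (((((hasDerivAt_const ε 1).sub hpow).const_mul b).mul (hasDerivAt_pow 2 ε)).div hshift hsub))
    |>.congr_deriv ?_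
  simp only [Pi.mul_apply, Pi.sub_apply]
  field_simp
  ring

lemma regret_bound_deriv_le {a b e p L : ℝ} (hb : 0 < b) (he0 : 0 < e) (he1 : e < 1)
    (hba : b * e = a) (hp : p - 1 ≤ p * ((e - 1) * L)) :
    4 * a * p * L - b * p * L * e ^ 2 / (e - 1) + b * (1 - p) * (e * (e - 2)) / (e - 1) ^ 2
      ≤ 2 * a * p * L := by
  have hne : e - 1 ≠ 0 := (sub_neg.mpr he1).ne
  have hscaled : b * e * (2 - e) * (p - 1) ≤ b * e * (2 - e) * (p * ((e - 1) * L)) :=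
    mul_le_mul_of_nonneg_left hp (mul_nonneg (mul_pos hb he0).le (by linarith))
  rw [← hba, ← sub_nonneg]
  have hgap : 2 * (b * e) * p * L - (4 * (b * e) * p * L - b * p * L * e ^ 2 / (e - 1)
      + b * (1 - p) * (e * (e - 2)) / (e - 1) ^ 2)
      = (b * e * (2 - e) * (p * ((e - 1) * L)) - b * e * (2 - e) * (p - 1)) / (e - 1) ^ 2 := by
    field_simp
    ring
  rw [hgap]
  exact div_nonneg (by linarith) (sq_nonneg _)

/-- Step in the proof of the high-noise-ratio lemma (clean data first): the
re-parametrized regret bound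
`Q(ε) = 4Γ₁²β^{ε−1} + Γ₂²(1−β^{ε−1})ε²/(ε−1)` is differentiable at
`ε₀ = Γ₁²/Γ₂² ∈ (0,1)` and its derivative there is at most
`−2Γ₁²β^{ε₀−1} log(1/β) < 0`. -/
theorem statement_19 (β Γ1 Γ2 : ℝ) (hβ : β ∈ Set.Ioo (0 : ℝ) 1)
    (hΓ1 : 0 < Γ1) (hΓ12 : Γ1 < Γ2) :
    DifferentiableAt ℝ
      (fun ε : ℝ => 4 * Γ1 ^ 2 * β ^ (ε - 1) + Γ2 ^ 2 * (1 - β ^ (ε - 1)) * ε ^ 2 / (ε - 1))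
      (Γ1 ^ 2 / Γ2 ^ 2) ∧
    deriv
      (fun ε : ℝ => 4 * Γ1 ^ 2 * β ^ (ε - 1) + Γ2 ^ 2 * (1 - β ^ (ε - 1)) * ε ^ 2 / (ε - 1))
      (Γ1 ^ 2 / Γ2 ^ 2) ≤
      -2 * Γ1 ^ 2 * β ^ (Γ1 ^ 2 / Γ2 ^ 2 - 1) * Real.log (1 / β) ∧
    -2 * Γ1 ^ 2 * β ^ (Γ1 ^ 2 / Γ2 ^ 2 - 1) * Real.log (1 / β) < 0 := by
  obtain ⟨hβ0, hβ1⟩ := hβ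
  have hΓ1sq : 0 < Γ1 ^ 2 := by positivity
  have hΓ2sq : 0 < Γ2 ^ 2 := by nlinarith
  set e := Γ1 ^ 2 / Γ2 ^ 2
  have he0 : 0 < e := by positivity
  have he1 : e < 1 := (div_lt_one hΓ2sq).mpr (by nlinarith)
  have hpos : 0 < β ^ (e - 1) := rpow_pos_of_pos hβ0 _
  have hp : β ^ (e - 1) - 1 ≤ β ^ (e - 1) * ((e - 1) * log β) := by
    simpa only [log_rpow hβ0] using self_sub_one_le_mul_log hpos.le
  have hlog : log (1 / β) = -log β := by rw [one_div, log_inv]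
  have hQ := hasDerivAt_regret_bound (a := 4 * Γ1 ^ 2) (b := Γ2 ^ 2) hβ0 he1.ne
  refine ⟨hQ.differentiableAt, ?_, ?_⟩
  · rw [hQ.deriv, hlog]
    have := regret_bound_deriv_le hΓ2sq he0 he1 (mul_div_cancel₀ _ hΓ2sq.ne') hp
    linarith
  · rw [hlog]
    nlinarith [mul_pos hΓ1sq hpos, log_neg hβ0 hβ1]
end
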